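/- arXiv:1710.01407 — 8 statements merged into one kernel-verified Lean document; each statement's English description precedes it below -/
import Mathlib

section
/- In the affine Hecke algebra AH_k, the element φ = T_1 T_2 ⋯ T_{k-1} y_k satisfies φ² T_{k-1} = T_1 φ². -/
/-!
Write `φ = P t y` with `P = T₁ ⋯ T_{k-2}`, `t = T_{k-1}` and `y = y_k`. Since `y` commutes with `P`,
`φ² = P t P y t y`. On the left, `φ² t` ends in `y (t y t) = q y y_{k-1}`. On the right, the braid
relations give `T₁ P t P = P t P t`, so `T₁ φ²` contains `(t y t) y = q y_{k-1} y`. The two results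
agree because `y_k` and `y_{k-1}` commute.
-/

section BraidWord

variable {M : Type*} [Monoid M] (T : ℕ → M)

lemma prod_map_range'_one_succ (m : ℕ) :
    ((List.range' 1 (m + 1)).map T).prod = ((List.range' 1 m).map T).prod * T (m + 1) := by
  rw [List.range'_concat, List.map_append, List.prod_append, Nat.add_comm]
  simp

lemma commute_prod_map_range'_one {x : M} {m : ℕ} (hx : ∀ j, 1 ≤ j → j ≤ m → Commute x (T j)) :
    Commute x ((List.range' 1 m).map T).prod := by
  refine Commute.list_prod_right _ _ fun z hz => ?_
  obtain ⟨j, hj, rfl⟩ := List.mem_map.mp hz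
  rw [List.mem_range'_1] at hj
  exact hx j (by omega) (by omega)

lemma mul_prod_map_range'_braid {n : ℕ}
    (hBraid : ∀ i, 1 ≤ i → i + 1 ≤ n → T i * T (i + 1) * T i = T (i + 1) * T i * T (i + 1))
    (hFar : ∀ i j, 1 ≤ i → i + 1 < j → j ≤ n → Commute (T i) (T j)) (m : ℕ) (hm : m + 1 ≤ n) :
    T 1 * ((List.range' 1 m).map T).prod * T (m + 1) * ((List.range' 1 m).map T).prod
      = ((List.range' 1 m).map T).prod * T (m + 1) * ((List.range' 1 m).map T).prod
          * T (m + 1) := by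
  induction m with
  | zero => simp
  | succ m ih =>
    rw [prod_map_range'_one_succ]
    set P := ((List.range' 1 m).map T).prod
    have hcomm : Commute (T (m + 2)) P :=
      commute_prod_map_range'_one T fun j hj1 hjm => (hFar j (m + 2) hj1 (by omega) hm).symm
    calc T 1 * (P * T (m + 1)) * T (m + 2) * (P * T (m + 1))
        = (T 1 * P * T (m + 1) * P) * (T (m + 2) * T (m + 1)) := by
          simp only [mul_assoc, hcomm.left_comm]
      _ = P * T (m + 1) * P * (T (m + 1) * T (m + 2) * T (m + 1)) := by
          rw [ih (by omega)]; simp only [mul_assoc]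
      _ = P * T (m + 1) * T (m + 2) * (P * T (m + 1)) * T (m + 2) := by
          rw [hBraid (m + 1) (by omega) hm]
          simp only [mul_assoc, hcomm.left_comm]

end BraidWord

lemma phi_sq_mul_eq_mul_phi_sq {R A : Type*} [CommSemiring R] [Semiring A] [Algebra R A]
    (q : R) (P t T₁ y z : A) (hyP : Commute y P) (hTy : t * y * t = q • z)
    (hbraid : T₁ * P * t * P = P * t * P * t) (hyz : Commute y z) :
    P * t * y * (P * t * y) * t = T₁ * (P * t * y * (P * t * y)) := by
  calc P * t * y * (P * t * y) * t
      = P * t * P * y * (t * y * t) := by simp only [mul_assoc, hyP.left_comm]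
    _ = q • (P * t * P * (y * z)) := by rw [hTy, mul_smul_comm, mul_assoc]
    _ = q • (P * t * P * (z * y)) := by rw [hyz.eq]
    _ = P * t * P * (t * y * t) * y := by
      rw [hTy, mul_smul_comm, smul_mul_assoc]; simp only [mul_assoc]
    _ = T₁ * P * t * P * (y * t * y) := by rw [hbraid]; simp only [mul_assoc]
    _ = T₁ * (P * t * y * (P * t * y)) := by simp only [mul_assoc, hyP.left_comm]

theorem stmt1_general (F : Type*) [Field F] (q : F)
    (A : Type*) [Ring A] [Algebra F A] (k : ℕ)
    (T y : ℕ → A)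
    (hBraid : ∀ i, 1 ≤ i → i + 1 ≤ k - 1 →
      T i * T (i + 1) * T i = T (i + 1) * T i * T (i + 1))
    (hFar : ∀ i j, 1 ≤ i → i ≤ k - 1 → 1 ≤ j → j ≤ k - 1 → i + 1 < j →
      T i * T j = T j * T i)
    (hTy : ∀ i, 1 ≤ i → i ≤ k - 1 → T i * y (i + 1) * T i = q • y i)
    (hyT : ∀ i j, 1 ≤ i → i ≤ k → 1 ≤ j → j ≤ k - 1 → i ≠ j → i ≠ j + 1 →
      y i * T j = T j * y i)
    (hyy : ∀ i j, 1 ≤ i → i ≤ k → 1 ≤ j → j ≤ k → y i * y j = y j * y i) :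
    2 ≤ k →
      (((List.range' 1 (k - 1)).map T).prod * y k)
          * (((List.range' 1 (k - 1)).map T).prod * y k) * T (k - 1)
        = T 1 * ((((List.range' 1 (k - 1)).map T).prod * y k)
          * (((List.range' 1 (k - 1)).map T).prod * y k)) := by
  intro hk
  obtain ⟨m, rfl⟩ : ∃ m, k = m + 2 := ⟨k - 2, by omega⟩
  simp only [show m + 2 - 1 = m + 1 from rfl, prod_map_range'_one_succ]
  have hyP : Commute (y (m + 2)) ((List.range' 1 m).map T).prod :=
    commute_prod_map_range'_one T fun j hj hjm =>
      hyT _ _ (by omega) le_rfl hj (by omega) (by omega) (by omega)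
  have hbraid := mul_prod_map_range'_braid T hBraid
    (fun i j hi hij hj => hFar i j hi (by omega) (by omega) hj hij) m le_rfl
  exact phi_sq_mul_eq_mul_phi_sq q _ _ _ _ _ hyP (hTy (m + 1) (by omega) le_rfl) hbraid
    (hyy _ _ (by omega) le_rfl (by omega) (by omega))

/-- In the affine Hecke algebra `AH_k`, the element `φ = T_1 ⋯ T_{k-1} y_k`
`y_1,…,y_k`), the element `φ = T_1 ⋯ T_{k-1} y_k` satisfies `φ² T_{k-1} = T_1 φ²`. -/
theorem stmt1 (F : Type*) [Field F] (q : F) (hq : q ≠ 0)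
    (A : Type*) [Ring A] [Algebra F A] (k : ℕ)
    (T y : ℕ → A)
    (hTunit : ∀ i, 1 ≤ i → i ≤ k - 1 → IsUnit (T i))
    (hHecke : ∀ i, 1 ≤ i → i ≤ k - 1 → (T i - 1) * (T i + q • (1 : A)) = 0)
    (hBraid : ∀ i, 1 ≤ i → i + 1 ≤ k - 1 →
      T i * T (i + 1) * T i = T (i + 1) * T i * T (i + 1))
    (hFar : ∀ i j, 1 ≤ i → i ≤ k - 1 → 1 ≤ j → j ≤ k - 1 → i + 1 < j →
      T i * T j = T j * T i)
    (hTy : ∀ i, 1 ≤ i → i ≤ k - 1 → T i * y (i + 1) * T i = q • y i)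
    (hyT : ∀ i j, 1 ≤ i → i ≤ k → 1 ≤ j → j ≤ k - 1 → i ≠ j → i ≠ j + 1 →
      y i * T j = T j * y i)
    (hyy : ∀ i j, 1 ≤ i → i ≤ k → 1 ≤ j → j ≤ k → y i * y j = y j * y i) :
    2 ≤ k →
      (((List.range' 1 (k - 1)).map T).prod * y k)
          * (((List.range' 1 (k - 1)).map T).prod * y k) * T (k - 1)
        = T 1 * ((((List.range' 1 (k - 1)).map T).prod * y k)
          * (((List.range' 1 (k - 1)).map T).prod * y k)) :=
  stmt1_general F q A k T y hBraid hFar hTy hyT hyy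
end

section
/- In the algebra AH'_k generated by invertible elements T_1,...,T_{k-1} satisfying the Hecke relations and an element φ satisfying φ T_i = T_{i+1} φ for i ≤ k-2 and φ² T_{k-1} = T_1 φ², define y_i = q^{i-k} T_{i-1}^{-1} ⋯ T_1^{-1} φ T_{k-1} ⋯ T_i for 1 ≤ i ≤ k. Then T_i y_{i+1} T_i = q y_i holds for 1 ≤ i ≤ k-1. -/
/-- In `AH'_k` (generators `T_i` satisfying the Hecke relations and `φ` with
`φ T_i = T_{i+1} φ` for `i ≤ k-2` and `φ² T_{k-1} = T_1 φ²`), the elements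
`y_i = q^{i-k} T_{i-1}⁻¹ ⋯ T_1⁻¹ φ T_{k-1} ⋯ T_i` satisfy
`T_i y_{i+1} T_i = q y_i` for `1 ≤ i ≤ k-1`. -/
theorem stmt2 (F : Type*) [Field F] (q : F) (hq : q ≠ 0)
    (A : Type*) [Ring A] [Algebra F A] (k : ℕ) (hk : 2 ≤ k)
    (T Tinv : ℕ → A) (φ : A)
    (hinv : ∀ i, 1 ≤ i → i ≤ k - 1 → T i * Tinv i = 1 ∧ Tinv i * T i = 1)
    (hHecke : ∀ i, 1 ≤ i → i ≤ k - 1 → (T i - 1) * (T i + q • (1 : A)) = 0)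
    (hBraid : ∀ i, 1 ≤ i → i + 1 ≤ k - 1 →
      T i * T (i + 1) * T i = T (i + 1) * T i * T (i + 1))
    (hFar : ∀ i j, 1 ≤ i → i ≤ k - 1 → 1 ≤ j → j ≤ k - 1 → i + 1 < j →
      T i * T j = T j * T i)
    (hφT : ∀ i, 1 ≤ i → i ≤ k - 2 → φ * T i = T (i + 1) * φ)
    (hφ2 : φ * φ * T (k - 1) = T 1 * (φ * φ))
    (y : ℕ → A)
    (hy : ∀ i, 1 ≤ i → i ≤ k → y i =
      (q⁻¹) ^ (k - i) •
        ((((List.range' 1 (i - 1)).map Tinv).reverse.prod * φ) *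
          (((List.range' i (k - i)).map T).reverse.prod))) :
    ∀ i, 1 ≤ i → i ≤ k - 1 → T i * y (i + 1) * T i = q • y i := by
  intro i hi1 hik
  have hki : k - i = (k - i - 1) + 1 := by omega
  have hki2 : k - (i + 1) = k - i - 1 := by omega
  have h1 : (i + 1) - 1 = (i - 1) + 1 := by omega
  have h1' : 1 + (i - 1) = i := by omega
  rw [hy (i + 1) (by omega) (by omega), hy i hi1 (by omega), h1, hki2, hki,
      List.range'_concat, List.range'_succ]
  simp only [one_mul, Nat.add_sub_cancel, h1']
  simp only [List.map_append, List.map_cons, List.map_nil, List.reverse_append,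
    List.reverse_cons, List.reverse_nil, List.nil_append, List.prod_append,
    List.prod_cons, List.prod_nil, mul_one, one_mul]
  obtain ⟨hTi, hTiv⟩ := hinv i hi1 hik
  rw [mul_smul_comm, smul_mul_assoc, smul_smul]
  congr 1
  · rw [pow_succ]
    field_simp
  · simp only [← mul_assoc]
    rw [hTi, one_mul]
end

section
/- In the algebra AH'_k, with y_i defined as y_i = q^{i-k} T_{i-1}^{-1} ⋯ T_1^{-1} φ T_{k-1} ⋯ T_i, the elements y_1 and y_k commute: y_1 y_k = y_k y_1. -/
/-- In `AH'_k` (generators `T_i` satisfying the Hecke relations and `φ` with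
`φ T_i = T_{i+1} φ` for `i ≤ k-2` and `φ² T_{k-1} = T_1 φ²`), the elements
`y_i = q^{i-k} T_{i-1}⁻¹ ⋯ T_1⁻¹ φ T_{k-1} ⋯ T_i` satisfy
`y_1 y_k = y_k y_1`. -/
theorem stmt4 (F : Type*) [Field F] (q : F) (hq : q ≠ 0)
    (A : Type*) [Ring A] [Algebra F A] (k : ℕ) (hk : 2 ≤ k)
    (T Tinv : ℕ → A) (φ : A)
    (hinv : ∀ i, 1 ≤ i → i ≤ k - 1 → T i * Tinv i = 1 ∧ Tinv i * T i = 1)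
    (hHecke : ∀ i, 1 ≤ i → i ≤ k - 1 → (T i - 1) * (T i + q • (1 : A)) = 0)
    (hBraid : ∀ i, 1 ≤ i → i + 1 ≤ k - 1 →
      T i * T (i + 1) * T i = T (i + 1) * T i * T (i + 1))
    (hFar : ∀ i j, 1 ≤ i → i ≤ k - 1 → 1 ≤ j → j ≤ k - 1 → i + 1 < j →
      T i * T j = T j * T i)
    (hφT : ∀ i, 1 ≤ i → i ≤ k - 2 → φ * T i = T (i + 1) * φ)
    (hφ2 : φ * φ * T (k - 1) = T 1 * (φ * φ))
    (y : ℕ → A)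
    (hy : ∀ i, 1 ≤ i → i ≤ k → y i =
      (q⁻¹) ^ (k - i) •
        ((((List.range' 1 (i - 1)).map Tinv).reverse.prod * φ) *
          (((List.range' i (k - i)).map T).reverse.prod))) :
    y 1 * y k = y k * y 1 := by
  set R : (ℕ → A) → ℕ → ℕ → A := fun f a n => ((List.range' a n).map f).reverse.prod with hR
  have Rzero : ∀ (f : ℕ → A) a, R f a 0 = 1 := by intro f a; simp [hR]
  have Rsucc : ∀ (f : ℕ → A) a n, R f a (n + 1) = f (a + n) * R f a n := by
    intro f a n
    simp [hR, List.range'_concat]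
  have Rcons : ∀ (f : ℕ → A) a n, R f a (n + 1) = R f (a + 1) n * f a := by
    intro f a n
    simp [hR, List.range'_succ]
  have Rcomm : ∀ (f : ℕ → A) (a n : ℕ) (x : A),
      (∀ i, a ≤ i → i < a + n → x * f i = f i * x) → x * R f a n = R f a n * x := by
    intro f a n x h
    induction n with
    | zero => rw [Rzero, one_mul, mul_one]
    | succ n ih =>
      rw [Rsucc, ← mul_assoc, h (a + n) (by omega) (by omega), mul_assoc,
        ih (fun i h1 h2 => h i h1 (by omega)), ← mul_assoc]
  have comm_inv : ∀ (x b binv : A), b * binv = 1 → binv * b = 1 → x * b = b * x →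
      x * binv = binv * x := by
    intro x b binv h1 h2 h3
    calc x * binv = binv * b * x * binv := by rw [h2, one_mul]
      _ = binv * (x * b) * binv := by rw [mul_assoc binv b x, ← h3]
      _ = binv * x * (b * binv) := by
            rw [← mul_assoc binv x b, mul_assoc (binv * x) b binv]
      _ = binv * x := by rw [h1, mul_one]
  -- φ moves through Tinv
  have φTinv : ∀ i, 1 ≤ i → i ≤ k - 2 → φ * Tinv i = Tinv (i + 1) * φ := by
    intro i h1 h2
    have hi := hinv i h1 (by omega)
    have hi1 := hinv (i + 1) (by omega) (by omega)
    calc φ * Tinv i = Tinv (i + 1) * T (i + 1) * (φ * Tinv i) := by rw [hi1.2, one_mul]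
      _ = Tinv (i + 1) * (T (i + 1) * φ) * Tinv i := by
            rw [mul_assoc (Tinv (i + 1)) (T (i + 1)), ← mul_assoc (T (i + 1)) φ (Tinv i),
              ← mul_assoc]
      _ = Tinv (i + 1) * φ * (T i * Tinv i) := by
            rw [← hφT i h1 h2, ← mul_assoc (Tinv (i + 1)) φ (T i),
              mul_assoc (Tinv (i + 1) * φ) (T i) (Tinv i)]
      _ = Tinv (i + 1) * φ := by rw [hi.1, mul_one]
  -- key identity : A_{n+1} B_{n+1} = C_n D_n
  have key : ∀ n, n + 1 ≤ k - 1 →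
      R T 1 (n + 1) * R Tinv 1 (n + 1) = R Tinv 1 n * R T 2 n := by
    intro n
    induction n with
    | zero =>
      intro h
      rw [Rsucc, Rsucc]
      simp only [Rzero, Nat.add_zero, mul_one, one_mul]
      exact (hinv 1 le_rfl (by omega)).1
    | succ n ih =>
      intro h
      have hn : n + 1 ≤ k - 1 := by omega
      have hi1 := hinv (n + 1) (by omega) (by omega)
      have hi2 := hinv (n + 2) (by omega) (by omega)
      have hb := hBraid (n + 1) (by omega) (by omega)
      have braid' : T (n + 2) * T (n + 1) * Tinv (n + 2) = Tinv (n + 1) * (T (n + 2) * T (n + 1)) := by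
        calc T (n + 2) * T (n + 1) * Tinv (n + 2)
            = Tinv (n + 1) * (T (n + 1) * T (n + 2) * T (n + 1) * Tinv (n + 2)) := by
              rw [← mul_assoc, ← mul_assoc, ← mul_assoc, hi1.2, one_mul]
          _ = Tinv (n + 1) * (T (n + 2) * T (n + 1) * (T (n + 2) * Tinv (n + 2))) := by
              rw [hb, mul_assoc (T (n + 2) * T (n + 1)) (T (n + 2)) (Tinv (n + 2))]
          _ = Tinv (n + 1) * (T (n + 2) * T (n + 1)) := by rw [hi2.1, mul_one]
      have c1 : R T 1 n * Tinv (n + 2) = Tinv (n + 2) * R T 1 n := by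
        refine (Rcomm T 1 n (Tinv (n + 2)) ?_).symm
        intro i hia hib
        exact (comm_inv (T i) (T (n + 2)) (Tinv (n + 2)) hi2.1 hi2.2
          (hFar i (n + 2) hia (by omega) (by omega) (by omega) (by omega))).symm
      have c2 : T (n + 2) * R Tinv 1 n = R Tinv 1 n * T (n + 2) := by
        refine Rcomm Tinv 1 n (T (n + 2)) ?_
        intro i hia hib
        exact comm_inv (T (n + 2)) (T i) (Tinv i) (hinv i hia (by omega)).1
          (hinv i hia (by omega)).2
          (hFar i (n + 2) hia (by omega) (by omega) (by omega) (by omega)).symm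
      have e1 : (1 : ℕ) + (n + 1) = n + 2 := by omega
      have e2 : (1 : ℕ) + n = n + 1 := by omega
      have e3 : (2 : ℕ) + n = n + 2 := by omega
      calc R T 1 (n + 1 + 1) * R Tinv 1 (n + 1 + 1)
          = T (n + 2) * R T 1 (n + 1) * (Tinv (n + 2) * R Tinv 1 (n + 1)) := by
            rw [Rsucc T 1 (n + 1), Rsucc Tinv 1 (n + 1), e1]
        _ = T (n + 2) * (T (n + 1) * (R T 1 n * Tinv (n + 2))) * R Tinv 1 (n + 1) := by
            rw [Rsucc T 1 n, e2, ← mul_assoc, mul_assoc (T (n + 2)),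
              mul_assoc (T (n + 1)) (R T 1 n) (Tinv (n + 2)),
              ← mul_assoc (T (n + 2))]
        _ = T (n + 2) * T (n + 1) * Tinv (n + 2) * (R T 1 n * R Tinv 1 (n + 1)) := by
            rw [c1, ← mul_assoc (T (n + 1)) (Tinv (n + 2)) (R T 1 n), ← mul_assoc,
              ← mul_assoc, mul_assoc (T (n + 2) * T (n + 1) * Tinv (n + 2))]
        _ = Tinv (n + 1) * (T (n + 2) * (R T 1 (n + 1) * R Tinv 1 (n + 1))) := by
            rw [braid', Rsucc T 1 n, e2]
            simp only [mul_assoc]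
        _ = Tinv (n + 1) * (R Tinv 1 n * (T (n + 2) * R T 2 n)) := by
            rw [ih hn, ← mul_assoc (T (n + 2)) (R Tinv 1 n) (R T 2 n), c2]
            simp only [mul_assoc]
        _ = R Tinv 1 (n + 1) * R T 2 (n + 1) := by
            rw [Rsucc Tinv 1 n, Rsucc T 2 n, e2, e3]
            simp only [mul_assoc]
  -- moving φ through products
  have φRTinv : ∀ n a, 1 ≤ a → a + n ≤ k - 1 → φ * R Tinv a n = R Tinv (a + 1) n * φ := by
    intro n
    induction n with
    | zero => intro a _ _; rw [Rzero, Rzero, one_mul, mul_one]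
    | succ n ih =>
      intro a ha h
      have e : a + 1 + n = a + n + 1 := by omega
      calc φ * R Tinv a (n + 1) = φ * Tinv (a + n) * R Tinv a n := by
            rw [Rsucc, ← mul_assoc]
        _ = Tinv (a + n + 1) * (φ * R Tinv a n) := by
            rw [φTinv (a + n) (by omega) (by omega), mul_assoc]
        _ = Tinv (a + n + 1) * R Tinv (a + 1) n * φ := by
            rw [ih a ha (by omega), ← mul_assoc]
        _ = R Tinv (a + 1) (n + 1) * φ := by rw [Rsucc Tinv (a + 1) n, e]
  have RTφ : ∀ n a, 1 ≤ a → a + n ≤ k - 1 → R T (a + 1) n * φ = φ * R T a n := by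
    intro n
    induction n with
    | zero => intro a _ _; rw [Rzero, Rzero, one_mul, mul_one]
    | succ n ih =>
      intro a ha h
      have e : a + 1 + n = a + n + 1 := by omega
      calc R T (a + 1) (n + 1) * φ = T (a + n + 1) * (R T (a + 1) n * φ) := by
            rw [Rsucc T (a + 1) n, e, mul_assoc]
        _ = T (a + n + 1) * (φ * R T a n) := by rw [ih a ha (by omega)]
        _ = φ * T (a + n) * R T a n := by
            rw [hφT (a + n) (by omega) (by omega), mul_assoc]
        _ = φ * R T a (n + 1) := by rw [Rsucc T a n, mul_assoc]
  -- set up p with k - 1 = p + 1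
  obtain ⟨p, hp⟩ : ∃ p, k - 1 = p + 1 := ⟨k - 2, by omega⟩
  have hy1 : y 1 = (q⁻¹) ^ (k - 1) • (φ * R T 1 (k - 1)) := by
    rw [hy 1 le_rfl (by omega)]
    simp [hR]
  have hyk : y k = R Tinv 1 (k - 1) * φ := by
    rw [hy k (by omega) le_rfl]
    simp [hR]
  rw [hy1, hyk, smul_mul_assoc, mul_smul_comm]
  congr 1
  rw [hp]
  have e12 : (1 : ℕ) + p = p + 1 := by omega
  have hφ2' : φ * φ * T (p + 1) = T 1 * (φ * φ) := by rw [← hp]; exact hφ2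
  have hB1 : R Tinv 1 (p + 1) * T 1 = R Tinv 2 p := by
    rw [Rcons Tinv 1 p, mul_assoc, (hinv 1 le_rfl (by omega)).2, mul_one]
  have hφR : φ * R Tinv 1 p = R Tinv 2 p * φ := by
    have := φRTinv p 1 le_rfl (by omega)
    norm_num at this
    exact this
  have hRφ : R T 2 p * φ = φ * R T 1 p := by
    have := RTφ p 1 le_rfl (by omega)
    norm_num at this
    exact this
  have hL : φ * R T 1 (p + 1) * (R Tinv 1 (p + 1) * φ) = R Tinv 2 p * (φ * (φ * R T 1 p)) := by
    calc φ * R T 1 (p + 1) * (R Tinv 1 (p + 1) * φ)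
        = φ * (R T 1 (p + 1) * R Tinv 1 (p + 1)) * φ := by simp only [mul_assoc]
      _ = φ * (R Tinv 1 p * R T 2 p) * φ := by rw [key p (by omega)]
      _ = φ * R Tinv 1 p * (R T 2 p * φ) := by simp only [mul_assoc]
      _ = R Tinv 2 p * φ * (φ * R T 1 p) := by rw [hφR, hRφ]
      _ = R Tinv 2 p * (φ * (φ * R T 1 p)) := by simp only [mul_assoc]
  have hRt : R Tinv 1 (p + 1) * φ * (φ * R T 1 (p + 1)) = R Tinv 2 p * (φ * (φ * R T 1 p)) := by
    calc R Tinv 1 (p + 1) * φ * (φ * R T 1 (p + 1))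
        = R Tinv 1 (p + 1) * (φ * φ * T (p + 1)) * R T 1 p := by
          rw [Rsucc T 1 p, e12]
          simp only [mul_assoc]
      _ = R Tinv 1 (p + 1) * (T 1 * (φ * φ)) * R T 1 p := by rw [hφ2']
      _ = R Tinv 1 (p + 1) * T 1 * (φ * (φ * R T 1 p)) := by simp only [mul_assoc]
      _ = R Tinv 2 p * (φ * (φ * R T 1 p)) := by rw [hB1]
  rw [hL, hRt]
end

section
/- For each n, k with 0 ≤ k ≤ n, there is a bijection between the set A(n,k) of pairs (μ, a) where μ is a partition and a ∈ ℤ_{≥0}^k with |μ| + |a| = n - k, and the set M(n,k) of decreasing chains of partitions λ^{(n)} ⊃ λ^{(n-1)} ⊃ ⋯ ⊃ λ^{(n-k)} with |λ^{(n-i)}| = n - i such that λ^{(n)} \ λ^{(n-k)} is a horizontal strip. The bijection sends (μ, a) to the chain with λ^{(n-i)} = sort(μ₁,...,μ_{ℓ(μ)}, a₁,...,a_i, a_{i+1}+1,...,a_k+1)′ for 0 ≤ i ≤ k, where sort arranges entries in decreasing order discarding zeros and ′ denotes conjugate partition. -/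
/-!
A multiset `s` of positive parts is handled through the antitone function `conjugate s`, its
conjugate partition; `s` is recovered from it because the multiplicity of `v + 1` in `s` is
`conjugate s v - conjugate s (v + 1)`.

Passing from `chainRow μ a i` to `chainRow μ a (i + 1)` lowers one part `a i + 1` to `a i`, which
removes a single box from row `a i` of the conjugate. So the chain of conjugates determines `a`
through its successive differences, and `μ + a` through its last member. Conversely, consecutive
members of a chain in `M(n,k)` differ by single boxes, in rows `a 0, …, a (k - 1)` say; the
horizontal strip condition says exactly that at most `conjugate ν v - conjugate ν (v + 1)` of
these boxes lie in row `v + 1`, where `conjugate ν = λ⁽ⁿ⁻ᵏ⁾`. Hence the nonzero `a l` form a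
sub-multiset of `ν`, and `μ` is what remains.
-/

open Finset Function

/-- Row `j` (counted from `0`) of the conjugate of the partition with parts `s`. -/
def conjugate (s : Multiset ℕ) (j : ℕ) : ℕ := s.countP (j < ·)

lemma conjugate_add (s t : Multiset ℕ) (j : ℕ) :
    conjugate (s + t) j = conjugate s j + conjugate t j :=
  Multiset.countP_add _ _ _

lemma conjugate_cons (x : ℕ) (s : Multiset ℕ) (j : ℕ) :
    conjugate (x ::ₘ s) j = conjugate s j + if j < x then 1 else 0 := by
  by_cases h : j < x <;> simp [conjugate, h]

lemma conjugate_antitone (s : Multiset ℕ) : Antitone (conjugate s) :=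
  fun _ _ hj => by
    simp only [conjugate, Multiset.countP_eq_card_filter]
    exact Multiset.card_le_card <| Multiset.monotone_filter_right _ fun _ hx => hj.trans_lt hx

lemma conjugate_eq_zero_of_sum_le {s : Multiset ℕ} {j : ℕ} (h : s.sum ≤ j) :
    conjugate s j = 0 :=
  Multiset.countP_eq_zero.2 fun _ hx => not_lt.2 <| (Multiset.le_sum_of_mem hx).trans h

lemma hasFiniteSupport_conjugate (s : Multiset ℕ) : HasFiniteSupport (conjugate s) :=
  (Set.finite_Iio s.sum).subset fun _ hj =>
    lt_of_not_ge fun h => hj (conjugate_eq_zero_of_sum_le h)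

lemma finsum_ite_lt (x : ℕ) : ∑ᶠ j, (if j < x then 1 else 0) = x := by
  rw [finsum_eq_sum_of_support_subset _ (s := range x) (by intro j; simp)]
  rw [Finset.sum_ite_of_true fun j hj => Finset.mem_range.1 hj]
  simp

lemma finsum_conjugate (s : Multiset ℕ) : ∑ᶠ j, conjugate s j = s.sum := by
  induction s using Multiset.induction with
  | empty => simp [conjugate]
  | cons x s ih =>
    simp only [conjugate_cons]
    rw [finsum_add_distrib (hasFiniteSupport_conjugate s), ih, finsum_ite_lt,
      Multiset.sum_cons, add_comm]
    exact (Set.finite_Iio x).subset fun j hj => by simpa using hj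

lemma conjugate_eq_add_count (s : Multiset ℕ) (j : ℕ) :
    conjugate s j = conjugate s (j + 1) + s.count (j + 1) := by
  induction s using Multiset.induction with
  | empty => simp [conjugate]
  | cons x s ih =>
    rw [conjugate_cons, conjugate_cons, Multiset.count_cons, ih]
    split_ifs <;> omega

lemma conjugate_map_succ (s : Multiset ℕ) (j : ℕ) :
    conjugate (s.map (· + 1)) j = conjugate s j + s.count j := by
  induction s using Multiset.induction with
  | empty => simp [conjugate]
  | cons x s ih =>
    rw [Multiset.map_cons, conjugate_cons, conjugate_cons, Multiset.count_cons, ih]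
    split_ifs <;> omega

lemma conjugate_filter_pos (s : Multiset ℕ) :
    conjugate (s.filter (0 < ·)) = conjugate s := by
  funext j
  rw [conjugate, conjugate, Multiset.countP_filter]
  exact Multiset.countP_congr rfl fun x _ => propext ⟨And.left, fun h => ⟨h, by omega⟩⟩

lemma eq_of_conjugate_eq {s t : Multiset ℕ} (hs : ∀ x ∈ s, 0 < x) (ht : ∀ x ∈ t, 0 < x)
    (h : conjugate s = conjugate t) : s = t := by
  ext (_ | v)
  · rw [Multiset.count_eq_zero.2 fun h0 => (hs 0 h0).false,
      Multiset.count_eq_zero.2 fun h0 => (ht 0 h0).false]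
  · have hs := conjugate_eq_add_count s v
    have ht := conjugate_eq_add_count t v
    rw [h] at hs
    omega

lemma Antitone.sum_Ico_tsub {d : ℕ → ℕ} (hd : Antitone d) {j N : ℕ} (hjN : j ≤ N) :
    ∑ v ∈ Ico j N, (d v - d (v + 1)) = d j - d N := by
  induction N, hjN using Nat.le_induction with
  | base => simp
  | succ N hjN ih =>
    rw [Finset.sum_Ico_succ_top hjN, ih]
    have : d (N + 1) ≤ d N := hd N.le_succ
    have : d N ≤ d j := hd hjN
    omega

lemma exists_conjugate_eq {d : ℕ → ℕ} (hd : Antitone d) (hfin : HasFiniteSupport d) :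
    ∃ s : Multiset ℕ, (∀ x ∈ s, 0 < x) ∧ conjugate s = d := by
  obtain ⟨N, hN⟩ := hfin.bddAbove
  have hzero : ∀ j, N < j → d j = 0 := fun j hj => by
    by_contra h
    exact absurd (hN h) (not_le.2 hj)
  refine ⟨∑ v ∈ range (N + 1), (d v - d (v + 1)) • {v + 1}, ?_, ?_⟩
  · intro x hx
    obtain ⟨v, -, hv⟩ := Multiset.mem_sum.1 hx
    rw [Multiset.mem_singleton.1 (Multiset.mem_of_mem_nsmul hv)]
    exact v.succ_pos
  · funext j
    rw [conjugate, ← Multiset.coe_countPAddMonoidHom, map_sum]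
    simp only [Multiset.coe_countPAddMonoidHom, Multiset.countP_nsmul, ← Multiset.cons_zero,
      Multiset.countP_cons, Multiset.countP_zero, zero_add, mul_ite, mul_one, mul_zero]
    have hIco : (range (N + 1)).filter (fun v => j < v + 1) = Ico j (N + 1) := by
      ext v; simp; omega
    rw [← Finset.sum_filter, hIco]
    rcases le_or_gt j (N + 1) with hj | hj
    · rw [hd.sum_Ico_tsub hj, hzero (N + 1) N.lt_succ_self, Nat.sub_zero]
    · rw [Finset.Ico_eq_empty_of_le hj.le, Finset.sum_empty, hzero j (by omega)]

lemma card_filter_getD (L : List ℕ) (p : ℕ → Prop) [DecidablePred p] :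
    #((range L.length).filter fun m => p (L.getD m 0)) = L.countP (p ·) := by
  induction L with
  | nil => simp
  | cons x L ih =>
    rw [Finset.card_filter, List.length_cons, Finset.sum_range_succ']
    simp only [List.getD_cons_succ, List.getD_cons_zero, List.countP_cons]
    rw [← Finset.card_filter, ih]
    by_cases h : p x <;> simp [h]

lemma ncard_lt_getD (L : List ℕ) (j : ℕ) :
    {m : ℕ | j < L.getD m 0}.ncard = L.countP (j < ·) := by
  have hset :
      {m : ℕ | j < L.getD m 0} = ↑((range L.length).filter fun m => j < L.getD m 0) := by
    ext m
    simp only [Set.mem_ofPred_eq, Finset.coe_filter, Finset.mem_range]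
    refine ⟨fun h => ⟨lt_of_not_ge fun hm => ?_, h⟩, And.right⟩
    rw [List.getD_eq_default _ _ hm] at h
    exact Nat.not_lt_zero j h
  rw [hset, Set.ncard_coe_finset, card_filter_getD]

lemma ncard_lt_getD_sort_reverse (s : Multiset ℕ) (j : ℕ) :
    {m : ℕ | j < (s.sort (· ≤ ·)).reverse.getD m 0}.ncard = conjugate s j := by
  rw [ncard_lt_getD, List.countP_reverse, conjugate, ← Multiset.coe_countP, Multiset.sort_eq]

lemma exists_eq_add_ite {f g : ℕ → ℕ} (hf : HasFiniteSupport f) (hle : ∀ j, g j ≤ f j)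
    (hsum : ∑ᶠ j, f j = ∑ᶠ j, g j + 1) :
    ∃ a, ∀ j, f j = g j + if j = a then 1 else 0 := by
  have hsupp : ∀ h : ℕ → ℕ, (∀ j, h j ≤ f j) → (support h).Finite := fun h hh =>
    hf.subset fun j hj => by
      have := hh j
      simp only [mem_support] at hj ⊢
      omega
  let d : ℕ →₀ ℕ := Finsupp.ofSupportFinite (f - g) (hsupp _ fun j => Nat.sub_le _ _)
  have hd : ∀ j, d j + g j = f j := fun j => Nat.sub_add_cancel (hle j)
  have hd1 : d.sum (fun _ m => m) = 1 := by
    have hfg := finsum_add_distrib d.hasFiniteSupport (hsupp g hle)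
    simp only [hd] at hfg
    rw [Finsupp.sum, ← finsum_eq_sum_of_support_subset _ (Finsupp.fun_support_eq d).le]
    omega
  obtain ⟨a, ha⟩ := (Finsupp.sum_eq_one_iff d).1 hd1
  refine ⟨a, fun j => ?_⟩
  have hj := DFunLike.congr_fun ha j
  rw [Finsupp.single_apply] at hj
  have := hd j
  split_ifs at hj ⊢ <;> omega

section Chains

variable {k : ℕ}

def valuesFrom (a : Fin k → ℕ) (i : ℕ) : Multiset ℕ :=
  (univ.filter fun l : Fin k => i ≤ (l : ℕ)).val.map a

lemma valuesFrom_zero (a : Fin k → ℕ) : valuesFrom a 0 = univ.val.map a := by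
  simp [valuesFrom]

lemma valuesFrom_last (a : Fin k → ℕ) : valuesFrom a k = 0 := by
  simp [valuesFrom, Fin.is_lt]

lemma valuesFrom_eq_cons (a : Fin k → ℕ) (l : Fin k) :
    valuesFrom a l = a l ::ₘ valuesFrom a (l + 1) := by
  have : univ.filter (fun m : Fin k => (l : ℕ) ≤ m)
      = (univ.filter fun m : Fin k => (l : ℕ) + 1 ≤ m).cons l (by simp) := by
    ext m; simp [Fin.ext_iff]; omega
  rw [valuesFrom, this, Finset.cons_val, Multiset.map_cons]
  rfl

lemma card_valuesFrom (a : Fin k → ℕ) (i : ℕ) : Multiset.card (valuesFrom a i) = k - i := by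
  have h := Finset.card_filter_add_card_filter_not (s := univ) fun l : Fin k => (l : ℕ) < i
  simp only [Fin.card_filter_val_lt, not_lt, card_univ, Fintype.card_fin] at h
  rw [valuesFrom, Multiset.card_map, Finset.card_val]
  omega

lemma map_filter_lt_add_valuesFrom (a : Fin k → ℕ) (i : ℕ) :
    (univ.filter fun l : Fin k => (l : ℕ) < i).val.map a + valuesFrom a i = univ.val.map a := by
  simp only [valuesFrom, ← Multiset.map_add, Finset.filter_val, ← not_lt]
  rw [Multiset.filter_add_not]

def chainRow (μ : Multiset ℕ) (a : Fin k → ℕ) (i : ℕ) : Multiset ℕ :=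
  μ + (univ.filter fun l : Fin k => (l : ℕ) < i).val.map a
    + (univ.filter fun l : Fin k => i ≤ (l : ℕ)).val.map (fun l => a l + 1)

lemma chainRow_eq (μ : Multiset ℕ) (a : Fin k → ℕ) (i : ℕ) :
    chainRow μ a i = μ + (univ.filter fun l : Fin k => (l : ℕ) < i).val.map a
      + (valuesFrom a i).map (· + 1) := by
  rw [chainRow, valuesFrom, Multiset.map_map]
  rfl

lemma conjugate_chainRow (μ : Multiset ℕ) (a : Fin k → ℕ) (i j : ℕ) :
    conjugate (chainRow μ a i) j =
      conjugate (μ + univ.val.map a) j + (valuesFrom a i).count j := by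
  rw [chainRow_eq, conjugate_add, conjugate_map_succ, conjugate_add, conjugate_add,
    ← map_filter_lt_add_valuesFrom a i, conjugate_add]
  ring

lemma sum_chainRow (μ : Multiset ℕ) (a : Fin k → ℕ) (i : ℕ) :
    (chainRow μ a i).sum = μ.sum + ∑ l, a l + (k - i) := by
  rw [chainRow_eq, Multiset.sum_add, Multiset.sum_add, Multiset.sum_map_add, Multiset.map_id',
    Multiset.map_const', Multiset.sum_replicate, smul_eq_mul, mul_one, card_valuesFrom]
  have hA := congrArg Multiset.sum (map_filter_lt_add_valuesFrom a i)
  rw [Multiset.sum_add] at hA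
  rw [Finset.sum_eq_multiset_sum, ← hA]
  ring

lemma conjugate_chainRow_castSucc (μ : Multiset ℕ) (a : Fin k → ℕ) (l : Fin k) (j : ℕ) :
    conjugate (chainRow μ a l) j =
      conjugate (chainRow μ a (l + 1)) j + if j = a l then 1 else 0 := by
  rw [conjugate_chainRow, conjugate_chainRow, valuesFrom_eq_cons, Multiset.count_cons, add_assoc]

lemma conjugate_chainRow_last (μ : Multiset ℕ) (a : Fin k → ℕ) :
    conjugate (chainRow μ a k) = conjugate (μ + univ.val.map a) := by
  funext j
  rw [conjugate_chainRow, valuesFrom_last, Multiset.count_zero, add_zero]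

end Chains

def IsPartitionPair (n k : ℕ) (p : Multiset ℕ × (Fin k → ℕ)) : Prop :=
  (∀ x ∈ p.1, 0 < x) ∧ p.1.sum + ∑ j, p.2 j = n - k

def IsHorizontalStripChain (n k : ℕ) (c : Fin (k + 1) → ℕ → ℕ) : Prop :=
  (∀ i, Antitone (c i)) ∧
  (∀ i, (support (c i)).Finite) ∧
  (∀ i : Fin (k + 1), ∑ᶠ j, c i j = n - (i : ℕ)) ∧
  (∀ i : Fin k, ∀ j, c i.succ j ≤ c i.castSucc j) ∧
  (∀ j, c 0 (j + 1) ≤ c (Fin.last k) j)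

section Bijection

variable {n k : ℕ}

lemma isHorizontalStripChain_conjugate_chainRow (hkn : k ≤ n) {μ : Multiset ℕ} {a : Fin k → ℕ}
    (hsum : μ.sum + ∑ l, a l = n - k) :
    IsHorizontalStripChain n k fun i => conjugate (chainRow μ a i) := by
  refine ⟨fun i => conjugate_antitone _, fun i => hasFiniteSupport_conjugate _, fun i => ?_,
    fun l j => ?_, fun j => ?_⟩
  · rw [finsum_conjugate, sum_chainRow]
    omega
  · dsimp only
    rw [Fin.val_succ, Fin.val_castSucc, conjugate_chainRow_castSucc]
    exact Nat.le_add_right _ _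
  · dsimp only
    rw [Fin.val_zero, Fin.val_last, conjugate_chainRow_last, conjugate_chainRow, valuesFrom_zero,
      conjugate_eq_add_count _ j, Multiset.count_add]
    omega

def toChain (hkn : k ≤ n) (p : {p // IsPartitionPair n k p}) :
    {c // IsHorizontalStripChain n k c} :=
  ⟨fun i => conjugate (chainRow p.1.1 p.1.2 i),
    isHorizontalStripChain_conjugate_chainRow hkn p.2.2⟩

lemma toChain_injective (hkn : k ≤ n) : Injective (toChain hkn) := by
  rintro ⟨⟨μ, a⟩, hμ, _⟩ ⟨⟨ν, b⟩, hν, _⟩ h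
  have hrow : ∀ i : Fin (k + 1), conjugate (chainRow μ a i) = conjugate (chainRow ν b i) :=
    fun i => congrFun (congrArg Subtype.val h) i
  have hab : a = b := by
    funext l
    have hs := congrFun (hrow l.castSucc) (a l)
    have ht := congrFun (hrow l.succ) (a l)
    rw [Fin.val_castSucc, conjugate_chainRow_castSucc, conjugate_chainRow_castSucc] at hs
    rw [Fin.val_succ] at ht
    by_contra hne
    rw [if_pos rfl, if_neg hne] at hs
    omega
  subst hab
  have hμν : μ = ν := by
    refine eq_of_conjugate_eq hμ hν (funext fun j => ?_)
    have hk := congrFun (hrow (Fin.last k)) j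
    rw [Fin.val_last, conjugate_chainRow_last, conjugate_chainRow_last, conjugate_add,
      conjugate_add] at hk
    omega
  subst hμν
  rfl

lemma IsHorizontalStripChain.exists_valuesFrom (hkn : k ≤ n) {c : Fin (k + 1) → ℕ → ℕ}
    (hc : IsHorizontalStripChain n k c) :
    ∃ a : Fin k → ℕ, ∀ i j, c i j = c (Fin.last k) j + (valuesFrom a i).count j := by
  obtain ⟨-, hfin, hsum, hle, -⟩ := hc
  have hstep (l : Fin k) : ∃ x, ∀ j, c l.castSucc j = c l.succ j + if j = x then 1 else 0 :=
    exists_eq_add_ite (hfin _) (hle l) (by rw [hsum, hsum, Fin.val_castSucc, Fin.val_succ]; omega)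
  choose a ha using hstep
  refine ⟨a, fun i => ?_⟩
  induction i using Fin.reverseInduction with
  | last => simp [valuesFrom_last]
  | cast l ih =>
    intro j
    rw [ha l j, ih j, Fin.val_castSucc, valuesFrom_eq_cons, Fin.val_succ, Multiset.count_cons,
      add_assoc]

lemma toChain_surjective (hkn : k ≤ n) : Surjective (toChain hkn) := by
  rintro ⟨c, hc⟩
  obtain ⟨a, ha⟩ := hc.exists_valuesFrom hkn
  obtain ⟨hanti, hfin, hsum, -, hstrip⟩ := hc
  obtain ⟨ν, hν, hνc⟩ := exists_conjugate_eq (hanti (Fin.last k)) (hfin _)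
  set α := (univ.val.map a).filter (0 < ·)
  -- the horizontal strip condition, read as a bound on multiplicities
  have hαν : α ≤ ν := by
    refine Multiset.le_iff_count.2 fun x => ?_
    rcases x with _ | v
    · simp [α]
    · have h0 := ha 0 (v + 1)
      have hν := conjugate_eq_add_count ν v
      rw [Fin.val_zero, valuesFrom_zero] at h0
      rw [hνc] at hν
      rw [Multiset.count_filter_of_pos (a := v + 1) v.succ_pos]
      have := hstrip v
      omega
  set μ := ν - α
  have hconj : conjugate (μ + univ.val.map a) = c (Fin.last k) := by
    funext j
    rw [conjugate_add, ← conjugate_filter_pos (univ.val.map a), ← conjugate_add,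
      tsub_add_cancel_of_le hαν, hνc]
  refine ⟨⟨(μ, a), fun x hx => hν x (Multiset.mem_of_le tsub_le_self hx), ?_⟩, ?_⟩
  · have h := finsum_conjugate (μ + univ.val.map a)
    rwa [hconj, hsum, Fin.val_last, Multiset.sum_add, ← Finset.sum_eq_multiset_sum, eq_comm] at h
  · refine Subtype.ext (funext fun i => funext fun j => ?_)
    change conjugate (chainRow μ a i) j = c i j
    rw [conjugate_chainRow, hconj, ha i j]

end Bijection

/-- Bijection between `A(n,k)` (pairs of a partition `μ` and `a ∈ ℤ_{≥0}^k` with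
`|μ|+|a| = n-k`) and `M(n,k)` (chains `λ⁽ⁿ⁾ ⊃ ⋯ ⊃ λ⁽ⁿ⁻ᵏ⁾` with
`λ⁽ⁿ⁾ \ λ⁽ⁿ⁻ᵏ⁾` a horizontal strip), sending `(μ,a)` to the chain with
`λ⁽ⁿ⁻ⁱ⁾ = sort(μ₁,…,μ_ℓ, a₁,…,a_i, a_{i+1}+1,…,a_k+1)′`.
Partitions in chains are encoded as antitone finitely-supported functions
`ℕ → ℕ`; the conjugate of the sorted sequence is expressed by counting entries
exceeding a given row index. -/
theorem stmt8 (n k : ℕ) (hkn : k ≤ n) :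
    ∃ e : {p : Multiset ℕ × (Fin k → ℕ) //
            (∀ x ∈ p.1, 0 < x) ∧ p.1.sum + ∑ j, p.2 j = n - k} ≃
          {c : Fin (k + 1) → ℕ → ℕ //
            (∀ i, Antitone (c i)) ∧
            (∀ i, (Function.support (c i)).Finite) ∧
            (∀ i : Fin (k + 1), ∑ᶠ j, c i j = n - (i : ℕ)) ∧
            (∀ i : Fin k, ∀ j, c i.succ j ≤ c i.castSucc j) ∧
            (∀ j, c 0 (j + 1) ≤ c (Fin.last k) j)},
      ∀ p i j,
        (e p).1 i j =
          Set.ncard {m : ℕ | j <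
            ((Multiset.sort
              (p.1.1
                + Multiset.map p.1.2
                    ((Finset.univ.filter (fun l : Fin k => (l : ℕ) < (i : ℕ))).val)
                + Multiset.map (fun l => p.1.2 l + 1)
                    ((Finset.univ.filter (fun l : Fin k => (i : ℕ) ≤ (l : ℕ))).val)) (· ≤ ·)).reverse.getD m 0)} :=
  ⟨Equiv.ofBijective (toChain hkn) ⟨toChain_injective hkn, toChain_surjective hkn⟩,
    fun p i j => (ncard_lt_getD_sort_reverse (chainRow p.1.1 p.1.2 i) j).symm⟩
end

section
/- Let J ⊆ ℂ[x,y] be an ideal invariant under the action of the cyclic group Γ = ℤ/(k+1)ℤ acting by (x,y) ↦ (x, ζy) for ζ a primitive (k+1)-st root of unity. Then there exist ideals I₀, I₁, ..., I_k of ℂ[x,y] with I₀ ⊆ I₁ ⊆ ⋯ ⊆ I_k and y·I_k ⊆ I₀ such that J = σ*I₀ + y·σ*I₁ + ⋯ + y^k·σ*I_k, where σ*(I) denotes the image of the ideal I under the ring map σ*: ℂ[x,y] → ℂ[x,y] sending x ↦ x, y ↦ y^{k+1}. Moreover the ideals I_j are uniquely determined by J. -/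
open MvPolynomial Finset

noncomputable section Stmt10Aux

abbrev RR := MvPolynomial (Fin 2) ℂ

def σk (k : ℕ) : RR →ₐ[ℂ] RR := aeval ![X 0, X 1 ^ (k+1)]
def Γc (c : ℂ) : RR →ₐ[ℂ] RR := aeval ![X 0, C c * X 1]

lemma finsupp_eq (d : Fin 2 →₀ ℕ) :
    d = Finsupp.single 0 (d 0) + Finsupp.single 1 (d 1) := by
  ext i; fin_cases i <;> simp

lemma monomial_eq' (d : Fin 2 →₀ ℕ) (c : ℂ) :
    (monomial d c : RR) = C c * X 0 ^ (d 0) * X 1 ^ (d 1) := by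
  rw [monomial_eq, Finsupp.prod_fintype _ _ (fun i => pow_zero _), Fin.prod_univ_two, mul_assoc]

lemma Γc_monomial (c : ℂ) (d : Fin 2 →₀ ℕ) (a : ℂ) :
    Γc c (monomial d a) = (c ^ (d 1)) • monomial d a := by
  rw [monomial_eq', smul_eq_C_mul]
  simp only [Γc, map_mul, map_pow, aeval_C, aeval_X]
  simp only [Matrix.cons_val_zero, Matrix.cons_val_one, Matrix.head_cons, mul_pow, map_pow, MvPolynomial.algebraMap_eq]
  ring

lemma coeff_Γc (c : ℂ) (f : RR) (d : Fin 2 →₀ ℕ) :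
    coeff d (Γc c f) = c ^ (d 1) * coeff d f := by
  conv_lhs => rw [f.as_sum, map_sum]
  rw [coeff_sum]
  simp only [Γc_monomial, coeff_smul, coeff_monomial, smul_eq_mul, mul_ite, mul_zero]
  rw [Finset.sum_ite_eq' f.support d (fun d' => c ^ (d' 1) * coeff d' f)]
  split
  · rfl
  · next h => rw [notMem_support_iff.mp h, mul_zero]

def E (k i : ℕ) (d : Fin 2 →₀ ℕ) : Fin 2 →₀ ℕ :=
  Finsupp.single 0 (d 0) + Finsupp.single 1 ((k+1) * d 1 + i)

lemma E_apply0 (k i : ℕ) (d : Fin 2 →₀ ℕ) : E k i d 0 = d 0 := by simp [E]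
lemma E_apply1 (k i : ℕ) (d : Fin 2 →₀ ℕ) : E k i d 1 = (k+1) * d 1 + i := by simp [E]

lemma E_inj (k i : ℕ) : Function.Injective (E k i) := by
  intro d d' h
  have h0 : d 0 = d' 0 := by
    have := DFunLike.congr_fun h 0
    simpa [E_apply0] using this
  have h1 : (k+1) * d 1 + i = (k+1) * d' 1 + i := by
    have := DFunLike.congr_fun h 1
    simpa [E_apply1] using this
  have h1' : d 1 = d' 1 :=
    Nat.eq_of_mul_eq_mul_left (Nat.succ_pos k) (Nat.add_right_cancel h1)
  rw [finsupp_eq d, finsupp_eq d', h0, h1']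

lemma sigma_monomial (k i : ℕ) (d : Fin 2 →₀ ℕ) (c : ℂ) :
    (X 1 : RR) ^ i * σk k (monomial d c) = monomial (E k i d) c := by
  rw [monomial_eq', monomial_eq']
  simp only [σk, map_mul, map_pow, aeval_C, aeval_X]
  simp only [Matrix.cons_val_zero, Matrix.cons_val_one, Matrix.head_cons,
    MvPolynomial.algebraMap_eq, E_apply0, E_apply1, ← pow_mul, pow_add]
  ring

lemma sigma_sum (k i : ℕ) (f : RR) :
    (X 1 : RR) ^ i * σk k f = ∑ d ∈ f.support, monomial (E k i d) (coeff d f) := by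
  conv_lhs => rw [f.as_sum, map_sum, Finset.mul_sum]
  exact Finset.sum_congr rfl fun d _ => sigma_monomial k i d (coeff d f)

lemma coeff_E (k i : ℕ) (f : RR) (d : Fin 2 →₀ ℕ) :
    coeff (E k i d) ((X 1 : RR) ^ i * σk k f) = coeff d f := by
  rw [sigma_sum, coeff_sum]
  simp only [coeff_monomial]
  rw [Finset.sum_eq_single d (fun d' _ hne => if_neg fun he => hne (E_inj k i he))
    (fun hd => by rw [notMem_support_iff.mp hd, if_pos rfl])]
  exact if_pos rfl

lemma sigma_inj (k i : ℕ) {f g : RR} (h : (X 1 : RR) ^ i * σk k f = (X 1 : RR) ^ i * σk k g) :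
    f = g := by
  ext d
  rw [← coeff_E k i f d, ← coeff_E k i g d, h]

lemma coeff_class (k i : ℕ) (f : RR) (d : Fin 2 →₀ ℕ)
    (h : coeff d ((X 1 : RR) ^ i * σk k f) ≠ 0) : d 1 % (k+1) = i % (k+1) := by
  rw [sigma_sum, coeff_sum] at h
  obtain ⟨d', -, hd'⟩ := Finset.exists_ne_zero_of_sum_ne_zero h
  rw [coeff_monomial] at hd'
  have : E k i d' = d := by by_contra hc; simp [hc] at hd'
  rw [← this, E_apply1, add_comm, Nat.add_mul_mod_self_left]

/-- reconstruction: support in class `i` (with `i ≤ k`) implies divisible form -/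
lemma reconstruct (k i : ℕ) (hi : i ≤ k) (f : RR)
    (h : ∀ d : Fin 2 →₀ ℕ, coeff d f ≠ 0 → d 1 % (k+1) = i) :
    ∃ g : RR, (X 1 : RR) ^ i * σk k g = f := by
  refine ⟨∑ d ∈ f.support, monomial
    (Finsupp.single 0 (d 0) + Finsupp.single 1 ((d 1 - i)/(k+1))) (coeff d f), ?_⟩
  rw [map_sum, Finset.mul_sum]
  conv_rhs => rw [f.as_sum]
  refine Finset.sum_congr rfl fun d hd => ?_
  rw [sigma_monomial]
  have hmod : d 1 % (k+1) = i := h d (mem_support_iff.mp hd)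
  have hq := Nat.div_add_mod (d 1) (k+1)
  rw [hmod] at hq
  have h1 : (d 1 - i) / (k+1) = d 1 / (k+1) := by
    rw [Nat.sub_eq_of_eq_add hq.symm, Nat.mul_div_cancel_left _ (Nat.succ_pos k)]
  have hE : E k i (Finsupp.single 0 (d 0) + Finsupp.single 1 ((d 1 - i)/(k+1))) = d := by
    ext j
    fin_cases j
    · simp [E, Finsupp.single_apply]
    · simp [E, Finsupp.single_apply, Fin.ext_iff]
      rw [h1, hq]
  rw [hE]

lemma pow_eq_pow_iff {k : ℕ} {ζ : ℂ} (hζ : IsPrimitiveRoot ζ (k+1)) (a b : ℕ) :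
    ζ ^ a = ζ ^ b ↔ a % (k+1) = b % (k+1) := by
  have hred : ∀ a : ℕ, ζ ^ a = ζ ^ (a % (k+1)) := by
    intro a
    conv_lhs => rw [← Nat.div_add_mod a (k+1)]
    rw [pow_add, pow_mul, hζ.pow_eq_one, one_pow, one_mul]
  constructor
  · intro h
    rw [hred a, hred b] at h
    exact hζ.pow_inj (Nat.mod_lt _ k.succ_pos) (Nat.mod_lt _ k.succ_pos) h
  · intro h
    rw [hred a, hred b, h]

/-- the averaging projection onto the `j`-th residue class -/
def Pj (k : ℕ) (ζ : ℂ) (j : ℕ) (f : RR) : RR :=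
  ((k+1 : ℂ))⁻¹ • ∑ m ∈ range (k+1), (ζ ^ (j*m))⁻¹ • Γc (ζ ^ m) f

lemma coeff_Pj {k : ℕ} {ζ : ℂ} (hζ : IsPrimitiveRoot ζ (k+1)) (j : ℕ) (f : RR)
    (d : Fin 2 →₀ ℕ) :
    coeff d (Pj k ζ j f) = if d 1 % (k+1) = j % (k+1) then coeff d f else 0 := by
  have hζ0 : ζ ≠ 0 := hζ.ne_zero k.succ_ne_zero
  rw [Pj, coeff_smul, coeff_sum]
  simp only [coeff_smul, coeff_Γc, smul_eq_mul]
  have key : ∀ m, (ζ ^ (j*m))⁻¹ * ((ζ ^ m) ^ (d 1) * coeff d f)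
      = (ζ ^ (d 1) * (ζ ^ j)⁻¹) ^ m * coeff d f := by
    intro m
    rw [mul_pow, ← pow_mul, ← pow_mul, ← inv_pow, mul_comm j m, pow_mul, mul_comm (d 1) m, pow_mul]
    ring
  rw [Finset.sum_congr rfl fun m _ => key m, ← Finset.sum_mul]
  by_cases hcl : d 1 % (k+1) = j % (k+1)
  · have hw : ζ ^ (d 1) * (ζ ^ j)⁻¹ = 1 := by
      rw [(pow_eq_pow_iff hζ (d 1) j).mpr hcl, mul_inv_cancel₀ (pow_ne_zero _ hζ0)]
    rw [if_pos hcl, hw]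
    simp only [one_pow, Finset.sum_const, card_range, nsmul_eq_mul, mul_one]
    rw [Nat.cast_add, Nat.cast_one, ← mul_assoc,
      inv_mul_cancel₀ (Nat.cast_add_one_ne_zero k), one_mul]
  · have hw : ζ ^ (d 1) * (ζ ^ j)⁻¹ ≠ 1 := by
      intro hc
      apply hcl
      rw [← pow_eq_pow_iff hζ (d 1) j]
      field_simp at hc
      exact hc
    rw [if_neg hcl, geom_sum_eq hw]
    have ha : (ζ ^ (d 1)) ^ (k+1) = 1 := by
      rw [← pow_mul, mul_comm, pow_mul, hζ.pow_eq_one, one_pow]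
    have hb : ((ζ ^ j)⁻¹) ^ (k+1) = 1 := by
      rw [inv_pow, ← pow_mul, mul_comm, pow_mul, hζ.pow_eq_one, one_pow, inv_one]
    have htop : (ζ ^ (d 1) * (ζ ^ j)⁻¹) ^ (k+1) = 1 := by rw [mul_pow, ha, hb, mul_one]
    rw [htop, sub_self, zero_div, zero_mul, mul_zero]

lemma sum_Pj {k : ℕ} {ζ : ℂ} (hζ : IsPrimitiveRoot ζ (k+1)) (f : RR) :
    ∑ j ∈ range (k+1), Pj k ζ j f = f := by
  ext d
  rw [coeff_sum]
  rw [Finset.sum_congr rfl fun j hj => by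
    rw [coeff_Pj hζ, Nat.mod_eq_of_lt (mem_range.mp hj)]]
  rw [Finset.sum_ite_eq (range (k+1)) (d 1 % (k+1)) (fun _ => coeff d f),
    if_pos (mem_range.mpr (Nat.mod_lt _ k.succ_pos))]

lemma Γc_comp (a b : ℂ) (f : RR) : Γc a (Γc b f) = Γc (a * b) f := by
  ext d
  rw [coeff_Γc, coeff_Γc, coeff_Γc, mul_pow]
  ring

lemma Γc_one (f : RR) : Γc 1 f = f := by
  ext d
  rw [coeff_Γc, one_pow, one_mul]

lemma Pj_additive (k : ℕ) (ζ : ℂ) (hζ : IsPrimitiveRoot ζ (k+1)) (j : ℕ) {α : Type*}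
    (s : Finset α) (t : α → RR) :
    Pj k ζ j (∑ i ∈ s, t i) = ∑ i ∈ s, Pj k ζ j (t i) := by
  ext d
  rw [coeff_Pj hζ, coeff_sum, coeff_sum]
  rw [Finset.sum_congr rfl fun i _ => coeff_Pj hζ j (t i) d]
  by_cases h : d 1 % (k+1) = j % (k+1) <;> simp [h]

lemma Pj_eq_self {k : ℕ} {ζ : ℂ} (hζ : IsPrimitiveRoot ζ (k+1)) {j : ℕ} {f : RR}
    (h : ∀ d : Fin 2 →₀ ℕ, coeff d f ≠ 0 → d 1 % (k+1) = j % (k+1)) :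
    Pj k ζ j f = f := by
  ext d
  rw [coeff_Pj hζ]
  by_cases hd : coeff d f = 0
  · rw [hd]; split <;> rfl
  · rw [if_pos (h d hd)]

lemma Pj_eq_zero {k : ℕ} {ζ : ℂ} (hζ : IsPrimitiveRoot ζ (k+1)) {j i : ℕ} {f : RR}
    (hne : i % (k+1) ≠ j % (k+1))
    (h : ∀ d : Fin 2 →₀ ℕ, coeff d f ≠ 0 → d 1 % (k+1) = i % (k+1)) :
    Pj k ζ j f = 0 := by
  ext d
  rw [coeff_Pj hζ, coeff_zero]
  by_cases hd : coeff d f = 0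
  · split <;> simp [hd]
  · rw [if_neg (fun hc => hne ((h d hd) ▸ hc))]

lemma Γc_pow_mem {ζ : ℂ} (J : Ideal RR)
    (hJ : ∀ f ∈ J, aeval ![(X 0 : RR), C ζ * X 1] f ∈ J)
    {f : RR} (hf : f ∈ J) (m : ℕ) : Γc (ζ ^ m) f ∈ J := by
  induction m with
  | zero => rw [pow_zero, Γc_one]; exact hf
  | succ n ih =>
      have he : Γc (ζ ^ (n+1)) f = Γc ζ (Γc (ζ ^ n) f) := by
        rw [Γc_comp, ← pow_succ']
      rw [he]
      exact hJ _ ih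

lemma Pj_mem {k : ℕ} {ζ : ℂ} (J : Ideal RR)
    (hJ : ∀ f ∈ J, aeval ![(X 0 : RR), C ζ * X 1] f ∈ J)
    (j : ℕ) {f : RR} (hf : f ∈ J) : Pj k ζ j f ∈ J := by
  rw [Pj, smul_eq_C_mul]
  refine J.mul_mem_left _ (Submodule.sum_mem J fun m _ => ?_)
  rw [smul_eq_C_mul]
  exact J.mul_mem_left _ (Γc_pow_mem J hJ hf m)

def Ifam (k : ℕ) (J : Ideal RR) (i : ℕ) : Ideal RR where
  carrier := {g | (X 1 : RR) ^ i * σk k g ∈ J}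
  add_mem' := by
    intro a b ha hb
    simp only [Set.mem_setOf_eq, map_add, mul_add] at *
    exact J.add_mem ha hb
  zero_mem' := by simp
  smul_mem' := by
    intro c x hx
    simp only [Set.mem_setOf_eq, smul_eq_mul, map_mul]
    rw [show (X 1 : RR) ^ i * (σk k c * σk k x) = σk k c * ((X 1) ^ i * σk k x) by ring]
    exact J.mul_mem_left _ hx

lemma mem_Ifam {k : ℕ} {J : Ideal RR} {i : ℕ} {g : RR} :
    g ∈ Ifam k J i ↔ (X 1 : RR) ^ i * σk k g ∈ J := Iff.rfl

lemma σk_X1 (k : ℕ) : σk k (X 1) = (X 1 : RR) ^ (k+1) := by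
  simp [σk]

end Stmt10Aux

/-- An ideal `J ⊆ ℂ[x,y]` invariant under `(x,y) ↦ (x, ζy)` (`ζ` a primitive
`(k+1)`-st root of unity) decomposes uniquely as
`J = σ*I₀ + y σ*I₁ + ⋯ + yᵏ σ*I_k` for a chain of ideals
`I₀ ⊆ I₁ ⊆ ⋯ ⊆ I_k` with `y·I_k ⊆ I₀`, where `σ* : x ↦ x, y ↦ y^{k+1}`.
Since each `I_j` is an ideal, the `ℂ[x,y^{k+1}]`-module `σ*I_j` is just the
image `σ*(I_j)`, so membership in the sum is expressed elementwise. -/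
theorem stmt10 (k : ℕ) (ζ : ℂ) (hζ : IsPrimitiveRoot ζ (k + 1))
    (J : Ideal (MvPolynomial (Fin 2) ℂ))
    (hJ : ∀ f ∈ J, aeval ![(X 0 : MvPolynomial (Fin 2) ℂ), C ζ * X 1] f ∈ J) :
    ∃! I : Fin (k + 1) → Ideal (MvPolynomial (Fin 2) ℂ),
      (∀ j : Fin k, I j.castSucc ≤ I j.succ) ∧
      (∀ f ∈ I (Fin.last k), (X 1 : MvPolynomial (Fin 2) ℂ) * f ∈ I 0) ∧
      (J : Set (MvPolynomial (Fin 2) ℂ)) =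
        {f | ∃ g : Fin (k + 1) → MvPolynomial (Fin 2) ℂ,
          (∀ j, g j ∈ I j) ∧
          f = ∑ j : Fin (k + 1), (X 1 : MvPolynomial (Fin 2) ℂ) ^ (j : ℕ) *
            aeval ![(X 0 : MvPolynomial (Fin 2) ℂ), (X 1) ^ (k + 1)] (g j)} := by
  have hσ : ∀ g : RR, aeval ![(X 0 : RR), (X 1) ^ (k + 1)] g = σk k g := fun _ => rfl
  refine ⟨fun j => Ifam k J (j : ℕ), ⟨?_, ?_, ?_⟩, ?_⟩
  · -- chain
    intro j g hg
    rw [mem_Ifam] at hg ⊢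
    rw [Fin.coe_castSucc] at hg
    rw [Fin.val_succ, pow_succ,
      show (X 1 : RR) ^ (j : ℕ) * X 1 * σk k g
        = X 1 * ((X 1 : RR) ^ (j : ℕ) * σk k g) by ring]
    exact J.mul_mem_left _ hg
  · -- cyclic
    intro f hf
    rw [mem_Ifam] at hf ⊢
    rw [Fin.val_zero, pow_zero, one_mul, map_mul, σk_X1, Fin.val_last] at *
    rw [show (X 1 : RR) ^ (k+1) * σk k f = X 1 * ((X 1 : RR) ^ k * σk k f) by ring]
    exact J.mul_mem_left _ hf
  · -- decomposition
    ext f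
    simp only [SetLike.mem_coe, Set.mem_setOf_eq]
    constructor
    · intro hf
      have hcl : ∀ j : Fin (k+1), ∀ d : Fin 2 →₀ ℕ,
          coeff d (Pj k ζ (j : ℕ) f) ≠ 0 → d 1 % (k+1) = (j : ℕ) := by
        intro j d hd
        rw [coeff_Pj hζ] at hd
        by_cases h : d 1 % (k + 1) = (j : ℕ) % (k + 1)
        · rw [h, Nat.mod_eq_of_lt j.isLt]
        · exact absurd rfl (by rwa [if_neg h] at hd)
      choose g hg using fun j : Fin (k+1) =>
        reconstruct k (j : ℕ) (Nat.lt_succ_iff.mp j.isLt) (Pj k ζ (j : ℕ) f) (hcl j)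
      refine ⟨g, fun j => ?_, ?_⟩
      · rw [mem_Ifam, hg j]
        exact Pj_mem J hJ _ hf
      · rw [Finset.sum_congr rfl fun j _ => by rw [hσ, hg j]]
        rw [Fin.sum_univ_eq_sum_range (fun j => Pj k ζ j f) (k+1), sum_Pj hζ]
    · rintro ⟨g, hg, rfl⟩
      refine Submodule.sum_mem J fun j _ => ?_
      rw [hσ]
      exact (mem_Ifam).mp (hg j)
  · -- uniqueness
    rintro I' ⟨-, -, hset'⟩
    funext j
    refine le_antisymm ?_ ?_
    · -- I' j ≤ Ifam j
      intro g hg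
      rw [mem_Ifam]
      have hmem : (X 1 : RR) ^ (j : ℕ) * σk k g ∈
          {f : RR | ∃ g' : Fin (k + 1) → RR, (∀ i, g' i ∈ I' i) ∧
            f = ∑ i : Fin (k + 1), (X 1 : RR) ^ (i : ℕ) *
              aeval ![(X 0 : RR), (X 1) ^ (k + 1)] (g' i)} := by
        refine ⟨Pi.single j g, fun i => ?_, ?_⟩
        · by_cases h : i = j
          · subst h; rw [Pi.single_eq_same]; exact hg
          · rw [Pi.single_eq_of_ne h]; exact (I' i).zero_mem
        · rw [Finset.sum_eq_single j (fun i _ hne => by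
            rw [Pi.single_eq_of_ne hne, map_zero, mul_zero]) (fun h => absurd (mem_univ j) h)]
          rw [Pi.single_eq_same, hσ]
      rw [← hset'] at hmem
      exact hmem
    · -- Ifam j ≤ I' j
      intro g hg
      rw [mem_Ifam] at hg
      have hmem := hset' ▸ (show (X 1 : RR) ^ (j : ℕ) * σk k g ∈ (J : Set RR) from hg)
      obtain ⟨g', hg', heq⟩ := hmem
      have hclass : ∀ i : Fin (k+1), ∀ d : Fin 2 →₀ ℕ,
          coeff d ((X 1 : RR) ^ (i : ℕ) * σk k (g' i)) ≠ 0 →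
            d 1 % (k+1) = (i : ℕ) % (k+1) := fun i => coeff_class k (i : ℕ) (g' i)
      have heq' : (X 1 : RR) ^ (j : ℕ) * σk k g
          = ∑ i : Fin (k + 1), (X 1 : RR) ^ (i : ℕ) * σk k (g' i) := by
        rw [heq]
        exact Finset.sum_congr rfl fun i _ => by rw [hσ]
      have happ := congrArg (Pj k ζ (j : ℕ)) heq'
      rw [Pj_eq_self hζ (coeff_class k (j : ℕ) g),
        Pj_additive k ζ hζ (j : ℕ) (univ : Finset (Fin (k+1)))
          (fun i => (X 1 : RR) ^ (i : ℕ) * σk k (g' i)),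
        Finset.sum_eq_single j
          (fun i _ hne => Pj_eq_zero hζ (fun hc => hne (Fin.ext (by
            rwa [Nat.mod_eq_of_lt i.isLt, Nat.mod_eq_of_lt j.isLt] at hc))) (hclass i))
          (fun h => absurd (mem_univ j) h),
        Pj_eq_self hζ (hclass j)] at happ
      rw [sigma_inj k (j : ℕ) happ]
      exact hg' j
end

section
/- Let I₀ ⊆ I₁ ⊆ ⋯ ⊆ I_k be subspaces of ℂ[x,y], each an ideal, and set J = σ*I₀ + y·σ*I₁ + ⋯ + y^k·σ*I_k where σ*(f(x,y)) = f(x, y^{k+1}). Then J is an ideal of ℂ[x,y] if and only if I₀ ⊆ I₁ ⊆ ⋯ ⊆ I_k and y·I_k ⊆ I₀. -/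
/-!
Write `Φ g = ∑ⱼ yʲ σ*(gⱼ)`, so that `J = Φ(∏ⱼ Iⱼ)`. The coefficient of `Φ g` at `x^a y^((k+1)b + j)`
is the coefficient of `gⱼ` at `x^a y^b`, so `Φ` is injective (`ℂ[x,y]` is free over `σ*ℂ[x,y]` on
`1, y, …, yᵏ`). Multiplication by `σ*c`, in particular by `x` and by constants, acts componentwise
and always preserves `J`; multiplication by `y` acts as the rotation
`(g₀, …, g_k) ↦ (y g_k, g₀, …, g_{k-1})`. Hence `J` is an ideal iff this rotation maps `∏ⱼ Iⱼ`
into itself, which is exactly `I₀ ⊆ ⋯ ⊆ I_k` together with `y I_k ⊆ I₀`.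
-/

open MvPolynomial

theorem MvPolynomial.mul_mem_of_forall_X_mul_mem {σ R : Type*} [CommSemiring R]
    (S : Submodule R (MvPolynomial σ R)) (hX : ∀ i, ∀ f ∈ S, X i * f ∈ S)
    (p : MvPolynomial σ R) : ∀ f ∈ S, p * f ∈ S := by
  induction p using MvPolynomial.induction_on with
  | C r => intro f hf; rw [C_mul']; exact S.smul_mem r hf
  | add p q hp hq => intro f hf; rw [add_mul]; exact S.add_mem (hp f hf) (hq f hf)
  | mul_X p i hp => intro f hf; rw [mul_assoc]; exact hp _ (hX i f hf)

section rotateMul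

variable {A : Type*} {n : ℕ}

def rotateMul [Mul A] (y : A) (g : Fin (n + 1) → A) : Fin (n + 1) → A :=
  Fin.cons (y * g (Fin.last n)) (Fin.init g)

theorem mapsTo_rotateMul_iff [Semiring A] (I : Fin (n + 1) → Ideal A) (y : A) :
    Set.MapsTo (rotateMul y) (Set.univ.pi fun j => I j) (Set.univ.pi fun j => I j) ↔
      (∀ j : Fin n, I j.castSucc ≤ I j.succ) ∧ ∀ f ∈ I (Fin.last n), y * f ∈ I 0 := by
  have single_mem {i : Fin (n + 1)} {f : A} (hf : f ∈ I i) :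
      Pi.single i f ∈ Set.univ.pi fun j => (I j : Set A) := by
    intro j _
    rcases eq_or_ne j i with rfl | hj
    · simpa using hf
    · simp [Pi.single_eq_of_ne hj]
  constructor
  · intro h
    refine ⟨fun j f hf => ?_, fun f hf => ?_⟩
    · simpa [rotateMul, Fin.init] using h (single_mem hf) j.succ (Set.mem_univ _)
    · simpa [rotateMul] using h (single_mem hf) 0 (Set.mem_univ _)
  · rintro ⟨hle, hlast⟩ g hg j -
    induction j using Fin.cases with
    | zero => exact hlast _ (hg _ (Set.mem_univ _))
    | succ j => exact hle j (hg _ (Set.mem_univ _))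

end rotateMul

variable {R : Type*} [CommSemiring R] (k : ℕ)

noncomputable def sigmaStar : MvPolynomial (Fin 2) R →ₐ[R] MvPolynomial (Fin 2) R :=
  aeval ![X 0, X 1 ^ (k + 1)]

theorem sigmaStar_X_zero : sigmaStar k (X 0 : MvPolynomial (Fin 2) R) = X 0 := by
  simp [sigmaStar]

theorem sigmaStar_X_one : sigmaStar k (X 1 : MvPolynomial (Fin 2) R) = X 1 ^ (k + 1) := by
  simp [sigmaStar]

noncomputable def sigmaStarExp (j : ℕ) (m : Fin 2 →₀ ℕ) : Fin 2 →₀ ℕ :=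
  Finsupp.single 0 (m 0) + Finsupp.single 1 ((k + 1) * m 1 + j)

theorem sigmaStarExp_inj_iff {i j : Fin (k + 1)} {u m : Fin 2 →₀ ℕ} :
    sigmaStarExp k i u = sigmaStarExp k j m ↔ i = j ∧ u = m := by
  refine ⟨fun h => ?_, by rintro ⟨rfl, rfl⟩; rfl⟩
  have h0 : u 0 = m 0 := by simpa [sigmaStarExp] using DFunLike.congr_fun h 0
  have h1 : (k + 1) * u 1 + i = (k + 1) * m 1 + j := by
    simpa [sigmaStarExp] using DFunLike.congr_fun h 1
  obtain ⟨hq, hr⟩ := (Nat.div_mod_unique k.succ_pos).2 ⟨(add_comm _ _).trans h1, i.isLt⟩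
  obtain ⟨hq', hr'⟩ := (Nat.div_mod_unique k.succ_pos).2 ⟨add_comm _ _, j.isLt⟩
  refine ⟨Fin.ext (hr.symm.trans hr'), ?_⟩
  ext a
  fin_cases a
  · exact h0
  · exact hq.symm.trans hq'

theorem X_one_pow_mul_sigmaStar_monomial (j : ℕ) (m : Fin 2 →₀ ℕ) (c : R) :
    X 1 ^ j * sigmaStar k (monomial m c) = monomial (sigmaStarExp k j m) c := by
  have exp0 : sigmaStarExp k j m 0 = m 0 := by simp [sigmaStarExp]
  have exp1 : sigmaStarExp k j m 1 = (k + 1) * m 1 + j := by simp [sigmaStarExp]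
  simp only [monomial_eq, Finsupp.prod_fintype _ _ (fun _ => pow_zero _), Fin.prod_univ_two,
    map_mul, map_pow, algHom_C, algebraMap_eq, sigmaStar_X_zero, sigmaStar_X_one, exp0, exp1]
  ring

theorem coeff_sigmaStarExp_X_one_pow_mul_sigmaStar (i j : Fin (k + 1)) (m : Fin 2 →₀ ℕ)
    (p : MvPolynomial (Fin 2) R) :
    coeff (sigmaStarExp k j m) (X 1 ^ (i : ℕ) * sigmaStar k p) =
      if i = j then coeff m p else 0 := by
  induction p using MvPolynomial.induction_on' with
  | monomial u c =>
    simp only [X_one_pow_mul_sigmaStar_monomial, coeff_monomial, sigmaStarExp_inj_iff, ite_and]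
  | add p q hp hq =>
    rw [map_add, mul_add, coeff_add, coeff_add, hp, hq]
    split_ifs <;> simp

noncomputable def assemble :
    (Fin (k + 1) → MvPolynomial (Fin 2) R) →ₗ[R] MvPolynomial (Fin 2) R :=
  ∑ j : Fin (k + 1),
    LinearMap.mulLeft R (X 1 ^ (j : ℕ)) ∘ₗ (sigmaStar k).toLinearMap ∘ₗ LinearMap.proj j

theorem assemble_apply (g : Fin (k + 1) → MvPolynomial (Fin 2) R) :
    assemble k g = ∑ j : Fin (k + 1), X 1 ^ (j : ℕ) * sigmaStar k (g j) := by
  simp [assemble]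

theorem coeff_sigmaStarExp_assemble (g : Fin (k + 1) → MvPolynomial (Fin 2) R) (j : Fin (k + 1))
    (m : Fin 2 →₀ ℕ) : coeff (sigmaStarExp k j m) (assemble k g) = coeff m (g j) := by
  simp only [assemble_apply, coeff_sum, coeff_sigmaStarExp_X_one_pow_mul_sigmaStar,
    Finset.sum_ite_eq', Finset.mem_univ, if_true]

theorem assemble_injective : Function.Injective (assemble (R := R) k) := fun g h hgh =>
  funext fun j => MvPolynomial.ext _ _ fun m => by
    rw [← coeff_sigmaStarExp_assemble, hgh, coeff_sigmaStarExp_assemble]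

theorem sigmaStar_mul_assemble (c : MvPolynomial (Fin 2) R)
    (g : Fin (k + 1) → MvPolynomial (Fin 2) R) :
    sigmaStar k c * assemble k g = assemble k (fun j => c * g j) := by
  simp only [assemble_apply, Finset.mul_sum, map_mul]
  exact Finset.sum_congr rfl fun j _ => mul_left_comm _ _ _

theorem X_one_mul_assemble (g : Fin (k + 1) → MvPolynomial (Fin 2) R) :
    X 1 * assemble k g = assemble k (rotateMul (X 1) g) := by
  rw [assemble_apply, assemble_apply, Fin.sum_univ_castSucc, Fin.sum_univ_succ, mul_add, add_comm,
    Finset.mul_sum]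
  simp only [rotateMul, Fin.cons_zero, Fin.cons_succ, Fin.init, map_mul, sigmaStar_X_one,
    Fin.val_zero, Fin.val_succ, Fin.val_castSucc, Fin.val_last, pow_zero, one_mul]
  congr 1
  · ring
  · exact Finset.sum_congr rfl fun j _ => by ring

noncomputable def assembled (I : Fin (k + 1) → Ideal (MvPolynomial (Fin 2) R)) :
    Submodule R (MvPolynomial (Fin 2) R) :=
  (Submodule.pi Set.univ fun j => (I j).restrictScalars R).map (assemble k)

variable {k}

theorem X_zero_mul_mem_assembled (I : Fin (k + 1) → Ideal (MvPolynomial (Fin 2) R))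
    {f : MvPolynomial (Fin 2) R} (hf : f ∈ assembled k I) : X 0 * f ∈ assembled k I := by
  obtain ⟨g, hg, rfl⟩ := hf
  rw [← sigmaStar_X_zero k, sigmaStar_mul_assemble]
  exact ⟨_, fun j _ => (I j).mul_mem_left _ (hg j trivial), rfl⟩

theorem forall_X_one_mul_mem_assembled_iff (I : Fin (k + 1) → Ideal (MvPolynomial (Fin 2) R)) :
    (∀ f ∈ assembled k I, X 1 * f ∈ assembled k I) ↔
      Set.MapsTo (rotateMul (X 1 : MvPolynomial (Fin 2) R)) (Set.univ.pi fun j => I j)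
        (Set.univ.pi fun j => I j) := by
  refine ⟨fun h g hg => ?_, fun h f ⟨g, hg, hf⟩ => ⟨_, h hg, by rw [← hf, X_one_mul_assemble]⟩⟩
  obtain ⟨g', hg', he⟩ := h _ ⟨g, hg, rfl⟩
  rw [X_one_mul_assemble] at he
  exact assemble_injective k he ▸ hg'

theorem coe_assembled (I : Fin (k + 1) → Ideal (MvPolynomial (Fin 2) R)) :
    (assembled k I : Set (MvPolynomial (Fin 2) R)) =
      {f | ∃ g : Fin (k + 1) → MvPolynomial (Fin 2) R, (∀ j, g j ∈ I j) ∧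
        f = ∑ j : Fin (k + 1), X 1 ^ (j : ℕ) * sigmaStar k (g j)} := by
  ext f
  simp only [assembled, SetLike.mem_coe, Submodule.mem_map, Submodule.mem_pi, Set.mem_univ,
    true_implies, Submodule.restrictScalars_mem, assemble_apply, eq_comm,
    Set.mem_ofPred_eq]

theorem exists_ideal_coe_eq_assembled_iff (I : Fin (k + 1) → Ideal (MvPolynomial (Fin 2) R)) :
    (∃ J : Ideal (MvPolynomial (Fin 2) R),
        (J : Set (MvPolynomial (Fin 2) R)) = assembled k I) ↔
      (∀ j : Fin k, I j.castSucc ≤ I j.succ) ∧ ∀ f ∈ I (Fin.last k), X 1 * f ∈ I 0 := by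
  rw [← mapsTo_rotateMul_iff, ← forall_X_one_mul_mem_assembled_iff]
  constructor
  · rintro ⟨J, hJ⟩ f hf
    rw [← SetLike.mem_coe, ← hJ] at hf ⊢
    exact J.mul_mem_left _ hf
  · intro h
    have hX : ∀ i, ∀ f ∈ assembled k I, X i * f ∈ assembled k I :=
      Fin.forall_fin_two.2 ⟨fun _ => X_zero_mul_mem_assembled I, h⟩
    exact ⟨{ (assembled k I).toAddSubmonoid with
      smul_mem' := fun p f hf => mul_mem_of_forall_X_mul_mem _ hX p f hf }, rfl⟩

/-- For ideals `I₀,…,I_k` of `ℂ[x,y]`, the subspace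
`J = σ*I₀ + y σ*I₁ + ⋯ + yᵏ σ*I_k` (with `σ* : x ↦ x, y ↦ y^{k+1}`) is an
ideal of `ℂ[x,y]` if and only if `I₀ ⊆ I₁ ⊆ ⋯ ⊆ I_k` and `y·I_k ⊆ I₀`. -/
theorem stmt11 (k : ℕ) (I : Fin (k + 1) → Ideal (MvPolynomial (Fin 2) ℂ)) :
    (∃ J : Ideal (MvPolynomial (Fin 2) ℂ),
      (J : Set (MvPolynomial (Fin 2) ℂ)) =
        {f | ∃ g : Fin (k + 1) → MvPolynomial (Fin 2) ℂ,
          (∀ j, g j ∈ I j) ∧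
          f = ∑ j : Fin (k + 1), (X 1 : MvPolynomial (Fin 2) ℂ) ^ (j : ℕ) *
            aeval ![(X 0 : MvPolynomial (Fin 2) ℂ), (X 1) ^ (k + 1)] (g j)})
    ↔ ((∀ j : Fin k, I j.castSucc ≤ I j.succ) ∧
        (∀ f ∈ I (Fin.last k), (X 1 : MvPolynomial (Fin 2) ℂ) * f ∈ I 0)) := by
  rw [← exists_ideal_coe_eq_assembled_iff, coe_assembled]
  rfl
end

section
/- For a partition μ with cell-content generating polynomial B_μ = Σ_{□∈μ} q^{c(□)} t^{r(□)}, the character of the cotangent space of Hilb^n(ℂ²) at the monomial ideal I_μ, given by Σ_{□∈μ} (q^{a(□)+1} t^{-l(□)} + q^{-a(□)} t^{l(□)+1}), equals qt·B_μ + B_μ* − (q−1)(t−1)·B_μ·B_μ*, where B_μ* = B_μ(q^{-1}, t^{-1}). -/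
/-!
Induct on the number of rows by removing the first (longest) row, of length `m`, leaving `ν`.
The arms and legs of the other cells do not change, and the cell `(0, c)` has arm `m - c - 1`
and leg `h c`, the height of column `c` of `ν`. Its two terms are `q^m · q^{-c} t^{-h c}` and
`q^{1-m} t · q^c t^{h c}`, and `t^h = 1 + (t - 1)[h]_t` turns the first row's contribution into
an expression in `B_ν` read column by column, `B_ν = Σ_c q^c [h c]_t`. With
`B_μ = [m]_q + t B_ν`, the induction step is then a polynomial identity that follows from
`(q - 1)[m]_q = q^m - 1`, its analogue for `q⁻¹`, and `q q⁻¹ = t t⁻¹ = 1`.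
-/

open Finset

namespace ArmLeg

noncomputable def legLength (μ : ℕ → ℕ) (r c : ℕ) : ℕ := {r' | r < r' ∧ c < μ r'}.ncard

noncomputable def colHeight (μ : ℕ → ℕ) (c : ℕ) : ℕ := {r | c < μ r}.ncard

lemma legLength_succ (μ : ℕ → ℕ) (r c : ℕ) :
    legLength μ (r + 1) c = legLength (fun i => μ (i + 1)) r c := by
  have : {r' | r + 1 < r' ∧ c < μ r'} = (· + 1) '' {r' | r < r' ∧ c < μ (r' + 1)} := by
    ext (_ | r') <;> simp
  rw [legLength, this, Set.ncard_image_of_injective _ (add_left_injective 1), legLength]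

lemma legLength_zero (μ : ℕ → ℕ) (c : ℕ) :
    legLength μ 0 c = colHeight (fun i => μ (i + 1)) c := by
  have : {r' | 0 < r' ∧ c < μ r'} = (· + 1) '' {r | c < μ (r + 1)} := by
    ext (_ | r') <;> simp
  rw [legLength, this, Set.ncard_image_of_injective _ (add_left_injective 1), colHeight]

lemma lt_colHeight_iff {μ : ℕ → ℕ} (hμ : Antitone μ) {n : ℕ} (hn : μ n = 0) {r c : ℕ} :
    r < colHeight μ c ↔ c < μ r := by
  have hex : ∃ k, μ k ≤ c := ⟨n, by simp [hn]⟩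
  have hIio : {r | c < μ r} = Set.Iio (Nat.find hex) := by
    ext r
    simp only [Set.mem_ofPred_eq, Set.mem_Iio, Nat.lt_find_iff, not_le]
    exact ⟨fun h m hm => h.trans_le (hμ hm), fun h => h r le_rfl⟩
  rw [colHeight, hIio, Set.ncard_Iio_nat, ← Set.mem_Iio, ← hIio, Set.mem_ofPred_eq]

variable {K : Type*} [Field K]

def armLegTerm (q t : K) (a l : ℕ) : K := q ^ (a + 1) * t⁻¹ ^ l + q⁻¹ ^ a * t ^ (l + 1)

def contentSum (q t : K) (μ : ℕ → ℕ) (n : ℕ) : K :=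
  ∑ r ∈ range n, ∑ c ∈ range (μ r), q ^ c * t ^ r

def columnSum (q t : K) (m : ℕ) (h : ℕ → ℕ) : K :=
  ∑ c ∈ range m, q ^ c * ∑ r ∈ range (h c), t ^ r

def cotangentFormula (q t B B' : K) : K := q * t * B + B' - (q - 1) * (t - 1) * B * B'

lemma contentSum_succ (q t : K) (μ : ℕ → ℕ) (n : ℕ) :
    contentSum q t μ (n + 1)
      = ∑ c ∈ range (μ 0), q ^ c + t * contentSum q t (fun i => μ (i + 1)) n := by
  simp only [contentSum, sum_range_succ', pow_zero, mul_one, pow_succ, mul_sum]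
  rw [add_comm]
  congr 1
  exact sum_congr rfl fun _ _ => sum_congr rfl fun _ _ => by ring

lemma contentSum_eq_columnSum (q t : K) {μ : ℕ → ℕ} (hμ : Antitone μ) {n : ℕ} (hn : μ n = 0)
    {m : ℕ} (hm : μ 0 ≤ m) : contentSum q t μ n = columnSum q t m (colHeight μ) := by
  simp only [contentSum, columnSum, mul_sum]
  refine sum_comm' fun r c => ?_
  simp only [mem_range, lt_colHeight_iff hμ hn]
  constructor
  · rintro ⟨-, hc⟩
    exact ⟨hc, hc.trans_le ((hμ (Nat.zero_le r)).trans hm)⟩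
  · rintro ⟨hc, -⟩
    refine ⟨not_le.mp fun hr => ?_, hc⟩
    have := hμ hr
    omega

lemma armLegTerm_sub_sub_one {q : K} (hq : q ≠ 0) (t : K) {c m : ℕ} (hcm : c < m) (l : ℕ) :
    armLegTerm q t (m - c - 1) l
      = q ^ m * (q⁻¹ ^ c * t⁻¹ ^ l) + q * q⁻¹ ^ m * t * (q ^ c * t ^ l) := by
  obtain ⟨k, rfl⟩ := Nat.exists_eq_add_of_lt hcm
  rw [show c + k + 1 - c - 1 = k by omega, armLegTerm]
  have hqq : q * q⁻¹ = 1 := mul_inv_cancel₀ hq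
  have hpow : q ^ c * q⁻¹ ^ c = 1 := by rw [← mul_pow, hqq, one_pow]
  linear_combination (-(q ^ (k + 1) * t⁻¹ ^ l) - q⁻¹ ^ k * t ^ (l + 1)) * hpow
    - q⁻¹ ^ k * t ^ (l + 1) * q ^ c * q⁻¹ ^ c * hqq

lemma sum_pow_mul_pow_eq_add_columnSum (q t : K) (m : ℕ) (h : ℕ → ℕ) :
    ∑ c ∈ range m, q ^ c * t ^ h c = ∑ c ∈ range m, q ^ c + (t - 1) * columnSum q t m h := by
  rw [columnSum, mul_sum, ← sum_add_distrib]
  refine sum_congr rfl fun c _ => ?_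
  linear_combination -q ^ c * geom_sum_mul t (h c)

lemma sum_armLegTerm_add_cotangentFormula {q t : K} (hq : q ≠ 0) (ht : t ≠ 0) (m : ℕ)
    (h : ℕ → ℕ) :
    ∑ c ∈ range m, armLegTerm q t (m - c - 1) (h c)
        + cotangentFormula q t (columnSum q t m h) (columnSum q⁻¹ t⁻¹ m h)
      = cotangentFormula q t (∑ c ∈ range m, q ^ c + t * columnSum q t m h)
          (∑ c ∈ range m, q⁻¹ ^ c + t⁻¹ * columnSum q⁻¹ t⁻¹ m h) := by
  have hqq : q * q⁻¹ = 1 := mul_inv_cancel₀ hq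
  have htt : t * t⁻¹ = 1 := mul_inv_cancel₀ ht
  rw [sum_congr rfl fun c hc => armLegTerm_sub_sub_one hq t (mem_range.mp hc) (h c),
    sum_add_distrib, ← mul_sum, ← mul_sum, sum_pow_mul_pow_eq_add_columnSum, sum_pow_mul_pow_eq_add_columnSum,
    cotangentFormula, cotangentFormula]
  set a := ∑ c ∈ range m, q ^ c
  set a' := ∑ c ∈ range m, q⁻¹ ^ c
  set B := columnSum q t m h
  set B' := columnSum q⁻¹ t⁻¹ m h
  linear_combination ((t - 1) * t⁻¹ * B' - a') * geom_sum_mul q m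
    - q * t * ((t - 1) * B + a) * geom_sum_mul q⁻¹ m
    + t * a' * ((t - 1) * B + a) * hqq + ((q - 1) * (t - 1) * B + q ^ m - 1) * B' * htt

theorem sum_armLegTerm_eq_cotangentFormula {q t : K} (hq : q ≠ 0) (ht : t ≠ 0) {n : ℕ}
    {μ : ℕ → ℕ} (hμ : Antitone μ) (hn : μ n = 0) :
    ∑ r ∈ range n, ∑ c ∈ range (μ r), armLegTerm q t (μ r - c - 1) (legLength μ r c)
      = cotangentFormula q t (contentSum q t μ n) (contentSum q⁻¹ t⁻¹ μ n) := by
  induction n generalizing μ with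
  | zero => simp [contentSum, cotangentFormula]
  | succ n ih =>
    have hν : Antitone fun i => μ (i + 1) := fun i j hij => hμ (Nat.succ_le_succ hij)
    have hνμ : μ 1 ≤ μ 0 := hμ (Nat.zero_le 1)
    simp only [sum_range_succ', legLength_succ, legLength_zero, contentSum_succ,
      ih hν hn, contentSum_eq_columnSum _ _ hν hn hνμ]
    rw [add_comm]
    exact sum_armLegTerm_add_cotangentFormula hq ht (μ 0) _

end ArmLeg

/-- The arms-and-legs formula for the character of the cotangent space of
`Hilb^n(ℂ²)` at a monomial ideal `I_μ`:
`Σ_{□∈μ} (q^{a(□)+1} t^{-l(□)} + q^{-a(□)} t^{l(□)+1})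
  = qt·B_μ + B_μ* − (q−1)(t−1)·B_μ·B_μ*`,
where `B_μ = Σ_{□∈μ} q^{c(□)} t^{r(□)}` and `*` is `q ↦ q⁻¹, t ↦ t⁻¹`.
The partition is an antitone finitely supported `μ : ℕ → ℕ`, cells are pairs
`(r,c)` with `c < μ r`, `arm (r,c) = μ r - c - 1`, and
`leg (r,c) = #{r' > r | c < μ r'}`. -/
theorem stmt18 (q t : FractionRing (MvPolynomial (Fin 2) ℚ))
    (hq : q = algebraMap (MvPolynomial (Fin 2) ℚ) _ (MvPolynomial.X 0))
    (ht : t = algebraMap (MvPolynomial (Fin 2) ℚ) _ (MvPolynomial.X 1))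
    (μ : ℕ → ℕ) (hanti : Antitone μ) (hfin : (Function.support μ).Finite)
    (cells : Finset (ℕ × ℕ))
    (hcells : ∀ p : ℕ × ℕ, p ∈ cells ↔ p.2 < μ p.1) :
    ∑ p ∈ cells,
        (q ^ (μ p.1 - p.2 - 1 + 1) *
            (t⁻¹) ^ (Set.ncard {r : ℕ | p.1 < r ∧ p.2 < μ r}) +
          (q⁻¹) ^ (μ p.1 - p.2 - 1) *
            t ^ (Set.ncard {r : ℕ | p.1 < r ∧ p.2 < μ r} + 1))
      = q * t * (∑ p ∈ cells, q ^ p.2 * t ^ p.1)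
        + (∑ p ∈ cells, (q⁻¹) ^ p.2 * (t⁻¹) ^ p.1)
        - (q - 1) * (t - 1) * (∑ p ∈ cells, q ^ p.2 * t ^ p.1) *
            (∑ p ∈ cells, (q⁻¹) ^ p.2 * (t⁻¹) ^ p.1) := by
  have hX (i : Fin 2) :
      algebraMap (MvPolynomial (Fin 2) ℚ) (FractionRing (MvPolynomial (Fin 2) ℚ)) (.X i) ≠ 0 :=
    (map_ne_zero_iff _ (IsFractionRing.injective _ _)).mpr (MvPolynomial.X_ne_zero i)
  obtain ⟨n, hn⟩ := hfin.exists_notMem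
  rw [Function.notMem_support] at hn
  have hmem (p : ℕ × ℕ) : p ∈ cells ↔ p.1 ∈ range n ∧ p.2 ∈ range (μ p.1) := by
    rw [hcells, mem_range, mem_range, iff_and_self]
    intro hp
    by_contra! hpn
    have := hanti hpn
    omega
  simp only [sum_finset_product cells (range n) (fun r => range (μ r)) hmem]
  subst hq ht
  exact ArmLeg.sum_armLegTerm_eq_cotangentFormula (hX 0) (hX 1) hanti hn
end

section
/- For λ^{(•)} = (λ^{(n)} ⊃ ⋯ ⊃ λ^{(n-k)}) a chain in M(n,k) with cell contents w_i = χ(λ^{(n-i+1)} \ λ^{(n-i)}), the expression qt·B_{λ^{(n-k)}} + B*_{λ^{(n)}} − (t−1)(q−1)·B_{λ^{(n-k)}}·B*_{λ^{(n)}} + (q−1)·Σ_{k ≥ i ≥ j ≥ 1} w_i w_j^{-1} equals the expression obtained from qt·B_μ + B_μ* − (q−1)(t−1)·B_μ·B_μ* — where μ is the interleaved partition with B_μ = Σ_{i=0}^{k} t^i B_{λ^{(n-i)}}(q, t^{k+1}) — by extracting the terms whose t-degree is divisible by k+1 and substituting q^a t^{b(k+1)} ↦ q^a t^b. -/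
noncomputable section

/-- Laurent polynomials in `q, t`, as the group algebra of `ℤ × ℤ` over ℚ. -/
abbrev LP : Type := AddMonoidAlgebra ℚ (ℤ × ℤ)

/-- The monomial `q^a t^b`. -/
def mn (a b : ℤ) : LP := AddMonoidAlgebra.single (a, b) 1

/-- `Σ_{□∈f} q^{ε c(□)} t^{ε s r(□)}`: for `ε = 1, s = 1` this is `B_f`, for
`ε = -1, s = 1` it is `B_f*`, and `s = k+1` realizes `B_f(q, t^{k+1})`. -/
def Bgen (f : ℕ → ℕ) (ε s : ℤ) : LP :=
  ∑ᶠ p : ℕ × ℕ, if p.2 < f p.1 then mn (ε * p.2) (ε * s * p.1) else 0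

/-- Extraction: keep monomials `q^a t^m` with `(k+1) ∣ m` and map them to
`q^a t^{m/(k+1)}`. -/
def extract (k : ℕ) (P : LP) : LP :=
  Finsupp.sum P.coeff fun m coef =>
    if ((k : ℤ) + 1) ∣ m.2 then
      AddMonoidAlgebra.single (m.1, m.2 / ((k : ℤ) + 1)) coef
    else 0

/-! The substitution `t ↦ t^{k+1}` turns `B_ν(q, t)` into `B_ν(q, t^{k+1})`, and extraction
sends `t^d · P(q, t^{k+1})` to `t^{d/(k+1)} · P` when `(k+1) ∣ d` and to `0` otherwise. All
`t`-shifts occurring in `B_μ`, `B_μ*` and `B_μ B_μ*` lie in `[-k, k+1]`, so extraction keeps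
only `B_{λ⁽ⁿ⁻ᵏ⁾}`, `B*_{λ⁽ⁿ⁾}`, the diagonal products `B_i B_i*`, the neighbouring products
`B_i B*_{i+1}` and `t B_k B_0*`. What remains is the telescoping identity
`Σ B_i B_i* − Σ B_i B*_{i+1} − B_k B_0* = Σ_{j ≤ i} w_i w_j⁻¹`, which holds because
consecutive diagrams of the chain differ by the single cell of content `w_i`. -/

open Finset

lemma mn_mul_mn (a b a' b' : ℤ) : mn a b * mn a' b' = mn (a + a') (b + b') := by
  simp [mn, AddMonoidAlgebra.single_mul_single]

lemma mn_zero_zero : mn 0 0 = 1 := rfl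

def substT (s : ℤ) : LP →+* LP :=
  AddMonoidAlgebra.mapDomainRingHom ℚ ((AddMonoidHom.id ℤ).prodMap (AddMonoidHom.mulLeft s))

lemma substT_single (s : ℤ) (m : ℤ × ℤ) (v : ℚ) :
    substT s (AddMonoidAlgebra.single m v) = AddMonoidAlgebra.single (m.1, s * m.2) v :=
  AddMonoidAlgebra.mapDomain_single

lemma substT_mn (s a b : ℤ) : substT s (mn a b) = mn a (s * b) :=
  substT_single s (a, b) 1

def cells (f : ℕ → ℕ) : Set (ℕ × ℕ) := {p | p.2 < f p.1}

lemma cells_finite {f : ℕ → ℕ} (hf : (Function.support f).Finite) : (cells f).Finite := by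
  refine (hf.biUnion fun r _ => (Set.finite_singleton r).prod (Set.finite_Iio (f r))).subset ?_
  rintro ⟨r, x⟩ (h : x < f r)
  simp only [Set.mem_iUnion, Set.mem_prod, Set.mem_singleton_iff, Set.mem_Iio]
  exact ⟨r, Function.mem_support.2 (by omega), rfl, h⟩

lemma cells_update_succ (f : ℕ → ℕ) (r : ℕ) :
    cells (Function.update f r (f r + 1)) = insert (r, f r) (cells f) := by
  ext ⟨a, x⟩
  rcases eq_or_ne a r with rfl | ha
  · simp only [cells, Set.mem_ofPred_eq, Function.update_self, Set.mem_insert_iff, Prod.mk.injEq,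
      true_and]
    omega
  · simp [cells, ha]

lemma Bgen_eq_finsum_mem (f : ℕ → ℕ) (ε s : ℤ) :
    Bgen f ε s = ∑ᶠ p ∈ cells f, mn (ε * p.2) (ε * s * p.1) :=
  finsum_congr fun p => (finsum_eq_if (p := p.2 < f p.1)).symm

lemma Bgen_update_succ {f : ℕ → ℕ} (hf : (Function.support f).Finite) (r : ℕ) (ε s : ℤ) :
    Bgen (Function.update f r (f r + 1)) ε s = Bgen f ε s + mn (ε * f r) (ε * s * r) := by
  rw [Bgen_eq_finsum_mem, Bgen_eq_finsum_mem, cells_update_succ,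
    finsum_mem_insert _ (show (r, f r) ∉ cells f from lt_irrefl (f r)) (cells_finite hf),
    add_comm]

lemma Bgen_eq_substT {f : ℕ → ℕ} (hf : (Function.support f).Finite) (ε s : ℤ) :
    Bgen f ε s = substT s (Bgen f ε 1) := by
  rw [Bgen_eq_finsum_mem, Bgen_eq_finsum_mem]
  refine Eq.symm (((substT s : LP →+ LP).map_finsum_mem _ (cells_finite hf)).trans ?_)
  refine finsum_congr fun p => finsum_congr fun _ => ?_
  rw [AddMonoidHom.coe_coe, substT_mn]
  congr 1
  ring

lemma extract_single (k : ℕ) (m : ℤ × ℤ) (v : ℚ) :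
    extract k (AddMonoidAlgebra.single m v)
      = if ((k : ℤ) + 1) ∣ m.2 then AddMonoidAlgebra.single (m.1, m.2 / ((k : ℤ) + 1)) v
        else 0 := by
  rw [extract, AddMonoidAlgebra.coeff_single]
  exact Finsupp.sum_single_index (by split <;> simp)

def extractHom (k : ℕ) : LP →+ LP where
  toFun := extract k
  map_zero' := by simp [extract]
  map_add' P Q := by
    rw [extract, extract, extract, AddMonoidAlgebra.coeff_add, Finsupp.sum_add_index]
    · intro m _; split <;> simp
    · intro m _ a b; split <;> simp

lemma extract_add (k : ℕ) (P Q : LP) : extract k (P + Q) = extract k P + extract k Q :=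
  map_add (extractHom k) P Q

lemma extract_sub (k : ℕ) (P Q : LP) : extract k (P - Q) = extract k P - extract k Q :=
  map_sub (extractHom k) P Q

lemma extract_sum {ι : Type*} (k : ℕ) (s : Finset ι) (f : ι → LP) :
    extract k (∑ i ∈ s, f i) = ∑ i ∈ s, extract k (f i) :=
  map_sum (extractHom k) f s

lemma extract_mn_mul_substT (k : ℕ) (b : ℤ) (X : LP) :
    extract k (mn 0 b * substT (k + 1) X)
      = if ((k : ℤ) + 1) ∣ b then mn 0 (b / ((k : ℤ) + 1)) * X else 0 := by
  induction X using AddMonoidAlgebra.induction_linear with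
  | zero =>
    simp only [map_zero, mul_zero, ite_self]
    exact (extractHom k).map_zero
  | add X Y hX hY =>
    rw [map_add, mul_add, extract_add, hX, hY]
    split <;> simp [mul_add]
  | single m v =>
    have hk : ((k : ℤ) + 1) ≠ 0 := by positivity
    rw [substT_single, mn, AddMonoidAlgebra.single_mul_single, extract_single, one_mul,
      Prod.mk_add_mk, zero_add]
    simp only [dvd_add_left (dvd_mul_right _ _)]
    split
    · rw [mn, AddMonoidAlgebra.single_mul_single, one_mul, Prod.mk_add_mk, zero_add,
        Int.add_mul_ediv_left _ _ hk]
    · rfl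

lemma extract_sum_mn_mul_substT {ι : Type*} (k : ℕ) (s : Finset ι) (e : ι → ℤ)
    (X : ι → LP) :
    extract k (∑ i ∈ s, mn 0 (e i) * substT (k + 1) (X i))
      = ∑ i ∈ s, if ((k : ℤ) + 1) ∣ e i then mn 0 (e i / ((k : ℤ) + 1)) * X i else 0 := by
  rw [extract_sum]
  exact sum_congr rfl fun i _ => extract_mn_mul_substT k (e i) (X i)

lemma dvd_iff_eq_zero_of_abs_lt {m x : ℤ} (h : |x| < m) : m ∣ x ↔ x = 0 :=
  ⟨fun hd => Int.eq_zero_of_abs_lt_dvd hd h, fun hx => hx ▸ dvd_zero m⟩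

namespace Fin

variable {k : ℕ}

lemma dvd_val_add_one_iff (i : Fin (k + 1)) : ((k : ℤ) + 1) ∣ (i : ℤ) + 1 ↔ i = last k := by
  have hi := i.is_lt
  rw [← dvd_sub_self_right, dvd_iff_eq_zero_of_abs_lt (by rw [abs_lt]; omega), Fin.ext_iff,
    val_last]
  omega

lemma dvd_neg_val_iff (i : Fin (k + 1)) : ((k : ℤ) + 1) ∣ -(i : ℤ) ↔ i = 0 := by
  have hi := i.is_lt
  rw [dvd_iff_eq_zero_of_abs_lt (by rw [abs_lt]; omega), Fin.ext_iff, val_zero]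
  omega

lemma dvd_val_sub_val_iff (i j : Fin (k + 1)) : ((k : ℤ) + 1) ∣ (i : ℤ) - j ↔ j = i := by
  have hi := i.is_lt
  have hj := j.is_lt
  rw [dvd_iff_eq_zero_of_abs_lt (by rw [abs_lt]; omega), Fin.ext_iff]
  omega

lemma dvd_val_sub_val_add_one_iff (i j : Fin (k + 1)) :
    ((k : ℤ) + 1) ∣ (i : ℤ) - j + 1 ↔ j = i + 1 := by
  rcases eq_or_ne i (last k) with rfl | hi
  · rw [val_last, show (k : ℤ) - j + 1 = -j + (k + 1) by ring, dvd_add_self_right,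
      dvd_neg_val_iff, last_add_one]
  · have hik : (i : ℕ) < k := val_lt_last hi
    have hj := j.is_lt
    rw [dvd_iff_eq_zero_of_abs_lt (by rw [abs_lt]; omega), Fin.ext_iff,
      val_add_one_of_lt' (by omega)]
    omega

end Fin

open Fin in
theorem extract_interleaved (k : ℕ) (P Q : Fin (k + 1) → LP) :
    extract k
      (mn 1 0 * mn 0 1 * (∑ i : Fin (k + 1), mn 0 i * substT (k + 1) (P i))
        + ∑ i : Fin (k + 1), mn 0 (-i) * substT (k + 1) (Q i)
        - (mn 1 0 - 1) * (mn 0 1 - 1) *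
          ((∑ i : Fin (k + 1), mn 0 i * substT (k + 1) (P i)) *
            ∑ j : Fin (k + 1), mn 0 (-j) * substT (k + 1) (Q j)))
    = mn 1 0 * mn 0 1 * P (last k) + Q 0
      - (mn 1 0 - 1) * (∑ m : Fin k, P m.castSucc * Q m.succ
          + mn 0 1 * (P (last k) * Q 0) - ∑ i, P i * Q i) := by
  have hq (a : ℤ) : substT (k + 1) (mn a 0) = mn a 0 := by rw [substT_mn, mul_zero]
  have hP : mn 1 0 * mn 0 1 * (∑ i : Fin (k + 1), mn 0 i * substT (k + 1) (P i))
      = ∑ i : Fin (k + 1), mn 0 (i + 1) * substT (k + 1) (mn 1 0 * P i) := by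
    rw [mul_sum]
    refine sum_congr rfl fun i _ => ?_
    rw [map_mul, hq, show mn 0 (i + 1) = mn 0 i * mn 0 1 by rw [mn_mul_mn, zero_add]]
    ring
  have hPQ : (mn 1 0 - 1) * (mn 0 1 - 1) *
        ((∑ i : Fin (k + 1), mn 0 i * substT (k + 1) (P i)) *
          ∑ j : Fin (k + 1), mn 0 (-j) * substT (k + 1) (Q j))
      = ∑ i : Fin (k + 1), ∑ j : Fin (k + 1), (mn 0 (i - j + 1) - mn 0 (i - j)) *
          substT (k + 1) ((mn 1 0 - 1) * (P i * Q j)) := by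
    rw [sum_mul_sum, mul_sum]
    refine sum_congr rfl fun i _ => ?_
    rw [mul_sum]
    refine sum_congr rfl fun j _ => ?_
    have e₁ : mn 0 (i - j) = mn 0 i * mn 0 (-j) := by rw [mn_mul_mn]; ring_nf
    have e₂ : mn 0 (i - j + 1) = mn 0 i * mn 0 (-j) * mn 0 1 := by
      rw [← e₁, mn_mul_mn]; ring_nf
    rw [map_mul, map_mul, map_sub, map_one, hq, e₁, e₂]
    ring
  rw [hP, hPQ, extract_sub, extract_add, extract_sum_mn_mul_substT, extract_sum_mn_mul_substT,
    extract_sum]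
  simp only [sub_mul, sum_sub_distrib, extract_sub, extract_sum_mn_mul_substT,
    dvd_val_add_one_iff, dvd_neg_val_iff, dvd_val_sub_val_iff, dvd_val_sub_val_add_one_iff,
    Fintype.sum_ite_eq']
  simp only [sum_univ_castSucc (n := k), coeSucc_eq_succ, last_add_one, val_last, val_zero,
    val_castSucc, val_succ, Nat.cast_add, Nat.cast_one, Nat.cast_zero, neg_zero, sub_self,
    sub_zero, sub_add_cancel_left, neg_add_cancel, Int.zero_ediv,
    Int.ediv_self (show (k : ℤ) + 1 ≠ 0 by positivity), mn_zero_zero, one_mul,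
    sum_sub_distrib, ← mul_sum]
  ring

theorem sum_range_mul_sub_sum_range_mul_succ {R : Type*} [CommRing R] (b b' : ℕ → R) (k : ℕ) :
    ∑ i ∈ range (k + 1), b i * b' i - ∑ i ∈ range k, b i * b' (i + 1) - b k * b' 0
      = ∑ i ∈ range k, ∑ j ∈ range (i + 1), (b i - b (i + 1)) * (b' j - b' (j + 1)) := by
  induction k with
  | zero => simp
  | succ k ih =>
    rw [sum_range_succ _ (k + 1), sum_range_succ (fun i => b i * b' (i + 1)),
      sum_range_succ (fun i => ∑ j ∈ range (i + 1), _), ← mul_sum, sum_range_sub', ← ih]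
    ring

open Fin.NatCast in
theorem Fin.sum_mul_sub_sum_mul_succ {R : Type*} [CommRing R] {k : ℕ} (b b' : Fin (k + 1) → R) :
    ∑ i, b i * b' i - ∑ m : Fin k, b m.castSucc * b' m.succ - b (Fin.last k) * b' 0
      = ∑ i : Fin k, ∑ j : Fin k,
          if j ≤ i then (b i.castSucc - b i.succ) * (b' j.castSucc - b' j.succ) else 0 := by
  have hcast (f : Fin (k + 1) → R) (i : Fin (k + 1)) : f ((i : ℕ) : Fin (k + 1)) = f i :=
    congrArg f (Fin.cast_val_eq_self i)
  have hcastSucc (f : Fin (k + 1) → R) (m : Fin k) : f ((m : ℕ) : Fin (k + 1)) = f m.castSucc :=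
    congrArg f (by rw [← Fin.val_castSucc, Fin.cast_val_eq_self])
  have hsucc (f : Fin (k + 1) → R) (m : Fin k) :
      f (((m : ℕ) + 1 : ℕ) : Fin (k + 1)) = f m.succ :=
    congrArg f (by rw [← Fin.val_succ, Fin.cast_val_eq_self])
  have hinner (i : Fin k) (g : ℕ → R) :
      ∑ j ∈ range ((i : ℕ) + 1), g j = ∑ j : Fin k, if j ≤ i then g j else 0 := by
    simp only [Fin.le_def]
    rw [Fin.sum_univ_eq_sum_range (fun j => if j ≤ (i : ℕ) then g j else 0), ← sum_filter]
    congr 1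
    ext j
    simp only [mem_range, mem_filter]
    omega
  have key := sum_range_mul_sub_sum_range_mul_succ
    (fun m => b (m : Fin (k + 1))) (fun m => b' (m : Fin (k + 1))) k
  rw [← Fin.sum_univ_eq_sum_range, ← Fin.sum_univ_eq_sum_range
      (fun i => b (i : Fin (k + 1)) * b' ((i + 1 : ℕ) : Fin (k + 1))),
    ← Fin.sum_univ_eq_sum_range] at key
  simp only [hcast, hcastSucc, hsucc, hinner] at key
  rwa [Fin.natCast_eq_last, Nat.cast_zero] at key

theorem stmt19_general (k : ℕ)
    (c : Fin (k + 1) → ℕ → ℕ) (row : Fin k → ℕ)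
    (hfin : ∀ i, (Function.support (c i)).Finite)
    (hw : ∀ j : Fin k,
      c j.castSucc = Function.update (c j.succ) (row j) (c j.succ (row j) + 1)) :
    mn 1 0 * mn 0 1 * Bgen (c (Fin.last k)) 1 1 + Bgen (c 0) (-1) 1
      - (mn 0 1 - 1) * (mn 1 0 - 1) *
          (Bgen (c (Fin.last k)) 1 1 * Bgen (c 0) (-1) 1)
      + (mn 1 0 - 1) *
          ∑ i : Fin k, ∑ j : Fin k,
            (if j ≤ i then
              mn (c i.succ (row i) : ℤ) (row i : ℤ) *
                mn (-(c j.succ (row j) : ℤ)) (-(row j : ℤ))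
            else 0)
    = extract k
        (mn 1 0 * mn 0 1 *
            (∑ i : Fin (k + 1), mn 0 (i : ℤ) * Bgen (c i) 1 ((k : ℤ) + 1))
          + (∑ i : Fin (k + 1), mn 0 (-(i : ℤ)) * Bgen (c i) (-1) ((k : ℤ) + 1))
          - (mn 1 0 - 1) * (mn 0 1 - 1) *
              ((∑ i : Fin (k + 1), mn 0 (i : ℤ) * Bgen (c i) 1 ((k : ℤ) + 1)) *
                (∑ i : Fin (k + 1),
                  mn 0 (-(i : ℤ)) * Bgen (c i) (-1) ((k : ℤ) + 1)))) := by
  have hcell (ε : ℤ) (j : Fin k) : Bgen (c j.castSucc) ε 1 - Bgen (c j.succ) ε 1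
      = mn (ε * c j.succ (row j)) (ε * row j) := by
    rw [hw, Bgen_update_succ (hfin _), mul_one, add_sub_cancel_left]
  have hS := Fin.sum_mul_sub_sum_mul_succ (fun i => Bgen (c i) 1 1) (fun i => Bgen (c i) (-1) 1)
  simp only [hcell, one_mul, neg_one_mul] at hS
  simp only [Bgen_eq_substT (hfin _) _ ((k : ℤ) + 1)]
  rw [extract_interleaved, ← hS]
  ring

/-- For a chain `λ⁽•⁾ ∈ M(n,k)` with marked cells of contents `w_i`, the
character formula
`qt B_{λ⁽ⁿ⁻ᵏ⁾} + B*_{λ⁽ⁿ⁾} − (t−1)(q−1) B_{λ⁽ⁿ⁻ᵏ⁾} B*_{λ⁽ⁿ⁾}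
  + (q−1) Σ_{k ≥ i ≥ j ≥ 1} w_i w_j⁻¹`
equals the `(k+1)`-extraction of `qt B_μ + B_μ* − (q−1)(t−1) B_μ B_μ*`, where
`μ` is the interleaved partition with `B_μ = Σ_i tⁱ B_{λ⁽ⁿ⁻ⁱ⁾}(q, t^{k+1})`. -/
theorem stmt19 (n k : ℕ) (hkn : k ≤ n)
    (c : Fin (k + 1) → ℕ → ℕ) (row : Fin k → ℕ)
    (hanti : ∀ i, Antitone (c i))
    (hfin : ∀ i, (Function.support (c i)).Finite)
    (hsize : ∀ i : Fin (k + 1), ∑ᶠ j, c i j = n - (i : ℕ))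
    (hw : ∀ j : Fin k,
      c j.castSucc = Function.update (c j.succ) (row j) (c j.succ (row j) + 1))
    (hstrip : ∀ m, c 0 (m + 1) ≤ c (Fin.last k) m) :
    mn 1 0 * mn 0 1 * Bgen (c (Fin.last k)) 1 1 + Bgen (c 0) (-1) 1
      - (mn 0 1 - 1) * (mn 1 0 - 1) *
          (Bgen (c (Fin.last k)) 1 1 * Bgen (c 0) (-1) 1)
      + (mn 1 0 - 1) *
          ∑ i : Fin k, ∑ j : Fin k,
            (if j ≤ i then
              mn (c i.succ (row i) : ℤ) (row i : ℤ) *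
                mn (-(c j.succ (row j) : ℤ)) (-(row j : ℤ))
            else 0)
    = extract k
        (mn 1 0 * mn 0 1 *
            (∑ i : Fin (k + 1), mn 0 (i : ℤ) * Bgen (c i) 1 ((k : ℤ) + 1))
          + (∑ i : Fin (k + 1), mn 0 (-(i : ℤ)) * Bgen (c i) (-1) ((k : ℤ) + 1))
          - (mn 1 0 - 1) * (mn 0 1 - 1) *
              ((∑ i : Fin (k + 1), mn 0 (i : ℤ) * Bgen (c i) 1 ((k : ℤ) + 1)) *
                (∑ i : Fin (k + 1),
                  mn 0 (-(i : ℤ)) * Bgen (c i) (-1) ((k : ℤ) + 1)))) :=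
  stmt19_general k c row hfin hw

end
end
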